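/- arXiv:1106.2772 — 15 statements merged into one kernel-verified Lean document; each statement's English description precedes it below -/
import Mathlib

section
/- If M is a dominating induced matching of a finite simple graph G, then M contains at least one edge of every odd cycle of G. -/
/-!
Every edge of `G` outside `M` has exactly one endpoint covered by `M`: at least one because `M`
dominates, at most one because `M` is an induced matching. So "covered by `M`" is a proper
2-colouring of `G` with the edges of `M` deleted, and an odd closed walk avoiding `M` would be an
odd closed walk in a bipartite graph.
-/

/-- `M` is an induced matching of `G` that dominates every edge:
edges of `M` are edges of `G`, pairwise at distance at least two,
and every edge of `G` shares an endpoint with some edge of `M`. -/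
def IsDIM {V : Type*} (G : SimpleGraph V) (M : Set (Sym2 V)) : Prop :=
  M ⊆ G.edgeSet ∧
  (∀ e ∈ M, ∀ f ∈ M, e ≠ f → ∀ u ∈ e, ∀ v ∈ f, u ≠ v ∧ ¬ G.Adj u v) ∧
  (∀ e ∈ G.edgeSet, ∃ f ∈ M, ∃ u, u ∈ e ∧ u ∈ f)

namespace IsDIM

variable {V : Type*} {G : SimpleGraph V} {M : Set (Sym2 V)}

theorem covered_iff_not_covered_of_adj (hM : IsDIM G M) {x y : V}
    (hxy : (G.deleteEdges M).Adj x y) : (∃ e ∈ M, x ∈ e) ↔ ¬ ∃ f ∈ M, y ∈ f := by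
  rw [SimpleGraph.deleteEdges_adj] at hxy
  obtain ⟨hxy, hxyM⟩ := hxy
  constructor
  · rintro ⟨e, he, hxe⟩ ⟨f, hf, hyf⟩
    by_cases hef : e = f
    · subst hef
      exact hxyM ((Sym2.mem_and_mem_iff hxy.ne).mp ⟨hxe, hyf⟩ ▸ he)
    · exact (hM.2.1 e he f hf hef x hxe y hyf).2 hxy
  · intro hy
    obtain ⟨f, hf, w, hwxy, hwf⟩ := hM.2.2 s(x, y) hxy
    rcases Sym2.mem_iff.mp hwxy with rfl | rfl
    · exact ⟨f, hf, hwf⟩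
    · exact absurd ⟨f, hf, hwf⟩ hy

open Classical in
noncomputable def coveredColoring (hM : IsDIM G M) : (G.deleteEdges M).Coloring Bool :=
  SimpleGraph.Coloring.mk (fun x => decide (∃ e ∈ M, x ∈ e)) fun hxy hcongr => by
    rw [decide_eq_decide] at hcongr
    exact iff_not_self (hcongr.symm.trans (hM.covered_iff_not_covered_of_adj hxy))

end IsDIM

theorem dim_meets_odd_cycle_general {V : Type*} (G : SimpleGraph V)
    (M : Set (Sym2 V)) (hM : IsDIM G M) {v : V} (c : G.Walk v v)
    (hodd : Odd c.length) :
    ∃ e ∈ M, e ∈ c.edges := by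
  by_contra! hc
  let c' := c.toDeleteEdges M fun e he heM => hc e heM he
  have hodd' : Odd c'.length := by rwa [SimpleGraph.Walk.length_transfer]
  exact iff_not_self ((hM.coveredColoring.odd_length_iff_not_congr c').mp hodd').symm

/-- A dominating induced matching contains at least one edge of every odd cycle. -/
theorem dim_meets_odd_cycle {V : Type*} [Fintype V] (G : SimpleGraph V)
    (M : Set (Sym2 V)) (hM : IsDIM G M) {v : V} (c : G.Walk v v)
    (hc : c.IsCycle) (hodd : Odd c.length) :
    ∃ e ∈ M, e ∈ c.edges :=
  dim_meets_odd_cycle_general G M hM c hodd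
end

section
/- If M is a dominating induced matching of a graph G, then M contains exactly one edge of every chordless cycle C_5 of G. -/
/-- A dominating induced matching contains exactly one edge of every chordless C₅. -/
theorem dim_C5_exactly_one {V : Type*} [Fintype V] (G : SimpleGraph V)
    (M : Set (Sym2 V)) (hM : IsDIM G M) (v : Fin 5 → V)
    (hinj : Function.Injective v)
    (hadj : ∀ i j : Fin 5, G.Adj (v i) (v j) ↔ (j = i + 1 ∨ i = j + 1)) :
    ∃! e, e ∈ M ∧ ∃ i : Fin 5, e = s(v i, v (i + 1)) := by
  obtain ⟨hsub, hind, hdom⟩ := hM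
  have hadj1 : ∀ i : Fin 5, G.Adj (v i) (v (i + 1)) := by
    intro i; rw [hadj]; left; rfl
  have hvne : ∀ i j : Fin 5, i ≠ j → v i ≠ v j := fun i j h hv => h (hinj hv)
  have hplus : ∀ i : Fin 5, i + 2 = i + 1 + 1 := by decide
  -- uniqueness of a cycle edge in M
  have huniq : ∀ i j : Fin 5, s(v i, v (i+1)) ∈ M → s(v j, v (j+1)) ∈ M →
      s(v i, v (i+1)) = s(v j, v (j+1)) := by
    intro i j hi hj
    by_contra hne'
    have hij : i ≠ j := by rintro rfl; exact hne' rfl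
    have hcase : j = i + 1 ∨ i = j + 1 ∨ j = i + 2 ∨ i = j + 2 := by
      have : ∀ a b : Fin 5, a ≠ b → (b = a + 1 ∨ a = b + 1 ∨ b = a + 2 ∨ a = b + 2) := by decide
      exact this i j hij
    have H := hind _ hi _ hj hne'
    rcases hcase with h | h | h | h
    · exact (H (v (i+1)) (by simp) (v j) (by simp)).1 (by rw [h])
    · exact (H (v i) (by simp) (v (j+1)) (by simp)).1 (by rw [h])
    · refine (H (v (i+1)) (by simp) (v j) (by simp)).2 ?_
      rw [h, hadj]; left; exact hplus i
    · refine (H (v i) (by simp) (v (j+1)) (by simp)).2 ?_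
      rw [h, hadj]; right; exact hplus j
  -- existence
  have hex : ∃ i : Fin 5, s(v i, v (i+1)) ∈ M := by
    by_contra hno
    push_neg at hno
    set P : Fin 5 → Prop := fun i => ∃ f ∈ M, v i ∈ f with hP
    -- each M-edge contains at most one cycle vertex
    have hone : ∀ f ∈ M, ∀ i j : Fin 5, v i ∈ f → v j ∈ f → i = j := by
      intro f hf i j hvi hvj
      by_contra hij
      have hfeq : f = s(v i, v j) :=
        ((Sym2.mem_and_mem_iff (hvne i j hij)).1 ⟨hvi, hvj⟩)
      have hAdj : G.Adj (v i) (v j) := by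
        have := hsub hf
        rwa [hfeq, SimpleGraph.mem_edgeSet] at this
      rcases (hadj i j).1 hAdj with h | h
      · exact hno i (by rw [← h, ← hfeq]; exact hf)
      · refine hno j ?_
        have : f = s(v j, v (j+1)) := by rw [hfeq, ← h, Sym2.eq_swap]
        rw [← this]; exact hf
    have hcons : ∀ i : Fin 5, ¬ (P i ∧ P (i+1)) := by
      rintro i ⟨⟨f, hf, hvf⟩, ⟨g, hg, hvg⟩⟩
      by_cases hfg : f = g
      · subst hfg
        have h' : i = i + 1 := hone f hf i (i+1) hvf hvg
        have : ∀ a : Fin 5, a ≠ a + 1 := by decide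
        exact this i h'
      · exact (hind f hf g hg hfg (v i) hvf (v (i+1)) hvg).2 (hadj1 i)
    have hdomS : ∀ i : Fin 5, P i ∨ P (i+1) := by
      intro i
      have he : s(v i, v (i+1)) ∈ G.edgeSet := by
        rw [SimpleGraph.mem_edgeSet]; exact hadj1 i
      obtain ⟨f, hf, u, hue, huf⟩ := hdom _ he
      rcases Sym2.mem_iff.1 hue with h | h
      · left; exact ⟨f, hf, by rw [← h]; exact huf⟩
      · right; exact ⟨f, hf, by rw [← h]; exact huf⟩
    have e40 : (4 : Fin 5) + 1 = 0 := by decide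
    rcases hdomS 0 with h0 | h1
    · have h2 : P 2 := (hdomS 1).resolve_left (fun h1 => hcons 0 ⟨h0, h1⟩)
      have h4 : P 4 := (hdomS 3).resolve_left (fun h3 => hcons 2 ⟨h2, h3⟩)
      exact hcons 4 ⟨h4, by rw [e40]; exact h0⟩
    · have h3 : P 3 := (hdomS 2).resolve_left (fun h2 => hcons 1 ⟨h1, h2⟩)
      have h0 : P 0 := by
        have := hdomS 4
        rw [e40] at this
        exact this.resolve_left (fun h4 => hcons 3 ⟨h3, h4⟩)
      exact hcons 0 ⟨h0, h1⟩
  obtain ⟨i0, hi0⟩ := hex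
  refine ⟨s(v i0, v (i0+1)), ⟨hi0, i0, rfl⟩, ?_⟩
  rintro e ⟨heM, j, rfl⟩
  exact huniq j i0 heM hi0
end

section
/- If M is a dominating induced matching of a graph G, then no edge of any chordless cycle C_4 of G belongs to M. -/
lemma dim_aux {V : Type*} (G : SimpleGraph V) (M : Set (Sym2 V)) (hM : IsDIM G M)
    (a b c d : V) (hca : c ≠ a) (hdb : d ≠ b)
    (hbc : G.Adj b c) (hcd : G.Adj c d) (hda : G.Adj d a) :
    s(a, b) ∉ M := by
  intro hab
  obtain ⟨f, hf, u, hu1, hu2⟩ := hM.2.2 s(c, d) hcd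
  have hne : s(a, b) ≠ f := by
    rintro rfl
    rw [Sym2.mem_iff] at hu1 hu2
    rcases hu1 with rfl | rfl <;> rcases hu2 with rfl | rfl
    · exact hca rfl
    · exact hbc.ne rfl
    · exact hda.ne rfl
    · exact hdb rfl
  rw [Sym2.mem_iff] at hu1
  rcases hu1 with rfl | rfl
  · exact (hM.2.1 s(a, b) hab f hf hne b (Sym2.mem_mk_right a b) u hu2).2 hbc
  · exact (hM.2.1 s(a, b) hab f hf hne a (Sym2.mem_mk_left a b) u hu2).2 hda.symm

/-- No edge of any chordless C₄ belongs to a dominating induced matching. -/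
theorem dim_no_C4_edge {V : Type*} [Fintype V] (G : SimpleGraph V)
    (M : Set (Sym2 V)) (hM : IsDIM G M) (v₁ v₂ v₃ v₄ : V)
    (h13 : v₁ ≠ v₃) (h24 : v₂ ≠ v₄)
    (h12 : G.Adj v₁ v₂) (h23 : G.Adj v₂ v₃) (h34 : G.Adj v₃ v₄) (h41 : G.Adj v₄ v₁)
    (n13 : ¬ G.Adj v₁ v₃) (n24 : ¬ G.Adj v₂ v₄) :
    s(v₁, v₂) ∉ M ∧ s(v₂, v₃) ∉ M ∧ s(v₃, v₄) ∉ M ∧ s(v₄, v₁) ∉ M := by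
  exact ⟨dim_aux G M hM v₁ v₂ v₃ v₄ h13.symm h24.symm h23 h34 h41,
    dim_aux G M hM v₂ v₃ v₄ v₁ h24.symm h13 h34 h41 h12,
    dim_aux G M hM v₃ v₄ v₁ v₂ h13 h24 h41 h12 h23,
    dim_aux G M hM v₄ v₁ v₂ v₃ h24 h13.symm h12 h23 h34⟩
end

section
/- If M is a dominating induced matching of a graph G and C is a chordless cycle C_6 in G, then either exactly two or none of the edges of C belong to M. -/
/-- A chordless C₆ contains either exactly two or none of the edges of a
dominating induced matching. -/
theorem dim_C6_two_or_none {V : Type*} [Fintype V] (G : SimpleGraph V)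
    (M : Set (Sym2 V)) (hM : IsDIM G M) (v : Fin 6 → V)
    (hinj : Function.Injective v)
    (hadj : ∀ i j : Fin 6, G.Adj (v i) (v j) ↔ (j = i + 1 ∨ i = j + 1)) :
    {e ∈ M | ∃ i : Fin 6, e = s(v i, v (i + 1))}.ncard = 2 ∨
    {e ∈ M | ∃ i : Fin 6, e = s(v i, v (i + 1))}.ncard = 0 := by
  classical
  set S := {e ∈ M | ∃ i : Fin 6, e = s(v i, v (i + 1))} with hSdef
  have hne : ∀ {i j : Fin 6}, i ≠ j → v i ≠ v j := fun h h' => h (hinj h')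
  have fne : ∀ {i j : Fin 6}, v i = v j → i = j := fun h => hinj h
  -- adjacency of consecutive vertices
  have hadjc : ∀ i : Fin 6, G.Adj (v i) (v (i + 1)) := fun i =>
    (hadj i (i + 1)).2 (Or.inl rfl)
  have finlem : ∀ i j : Fin 6, i ≠ j → j ≠ i + 1 → i ≠ j + 1 → i ≠ j + 1 + 1 →
      j ≠ i + 1 + 1 → j = i + 3 := by decide
  -- Lemma A : two distinct cycle edges both in M are opposite
  have lemA : ∀ i j : Fin 6, s(v i, v (i + 1)) ∈ M → s(v j, v (j + 1)) ∈ M →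
      i ≠ j → j = i + 3 := by
    intro i j hi hj hij
    have hedne : s(v i, v (i + 1)) ≠ s(v j, v (j + 1)) := by
      intro h
      rw [Sym2.eq_iff] at h
      rcases h with ⟨h1, _⟩ | ⟨h1, h2⟩
      · exact hij (fne h1)
      · have e1 := fne h1; have e2 := fne h2
        omega
    have key := hM.2.1 _ hi _ hj hedne
    have gA : ∀ a b : Fin 6, v a ∈ s(v i, v (i + 1)) → v b ∈ s(v j, v (j + 1)) →
        a ≠ b ∧ ¬(b = a + 1 ∨ a = b + 1) := by
      intro a b ha hb
      obtain ⟨h1, h2⟩ := key _ ha _ hb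
      exact ⟨fun h => h1 (by rw [h]), fun h => h2 ((hadj a b).2 h)⟩
    have c1 := gA i j (Sym2.mem_mk_left _ _) (Sym2.mem_mk_left _ _)
    have c2 := gA i (j + 1) (Sym2.mem_mk_left _ _) (Sym2.mem_mk_right _ _)
    have c3 := gA (i + 1) j (Sym2.mem_mk_right _ _) (Sym2.mem_mk_left _ _)
    push_neg at c1 c2 c3
    exact finlem i j c1.1 c1.2.1 c1.2.2 c2.2.2 c3.2.1
  -- Lemma B : if a cycle edge is in M then so is the opposite one
  have lemB : ∀ i : Fin 6, s(v i, v (i + 1)) ∈ M → s(v (i + 3), v (i + 4)) ∈ M := by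
    intro i hi
    -- dominate edge (i+2, i+3)
    obtain ⟨g, hg, u, hu1, hu2⟩ := hM.2.2 s(v (i + 2), v (i + 3)) (by
      rw [SimpleGraph.mem_edgeSet, hadj]
      left; rw [add_assoc]; rfl)
    have hg3 : v (i + 3) ∈ g := by
      rcases Sym2.mem_iff.1 hu1 with h | h
      · exfalso
        have hgne : s(v i, v (i + 1)) ≠ g := by
          intro he
          have : v (i + 2) ∈ s(v i, v (i + 1)) := by rw [he, ← h]; exact hu2
          rcases Sym2.mem_iff.1 this with h' | h'
          · have := fne h'.symm; omega
          · have := fne h'.symm; omega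
        have := (hM.2.1 _ hi _ hg hgne _ (Sym2.mem_mk_right _ _) u hu2).2
        rw [h] at this
        exact this ((hadj _ _).2 (Or.inl (by rw [add_assoc]; rfl)))
      · rw [← h]; exact hu2
    -- dominate edge (i+4, i+5)
    obtain ⟨k, hk, w, hw1, hw2⟩ := hM.2.2 s(v (i + 4), v (i + 5)) (by
      rw [SimpleGraph.mem_edgeSet, hadj]
      left; rw [add_assoc]; rfl)
    have hk4 : v (i + 4) ∈ k := by
      rcases Sym2.mem_iff.1 hw1 with h | h
      · rw [← h]; exact hw2
      · exfalso
        have hkne : s(v i, v (i + 1)) ≠ k := by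
          intro he
          have : v (i + 5) ∈ s(v i, v (i + 1)) := by rw [he, ← h]; exact hw2
          rcases Sym2.mem_iff.1 this with h' | h'
          · have := fne h'.symm; omega
          · have := fne h'.symm; omega
        have := (hM.2.1 _ hi _ hk hkne _ (Sym2.mem_mk_left _ _) w hw2).2
        rw [h] at this
        exact this ((hadj _ _).2 (Or.inr (by
          rw [add_assoc, show (5 + 1 : Fin 6) = 0 from rfl, add_zero])))
    have hgk : g = k := by
      by_contra hne'
      have := (hM.2.1 _ hg _ hk hne' _ hg3 _ hk4).2
      exact this ((hadj _ _).2 (Or.inl (by rw [add_assoc]; rfl)))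
    rw [hgk] at hg3
    have hvne : v (i + 3) ≠ v (i + 4) := hne (by omega)
    have : k = s(v (i + 3), v (i + 4)) :=
      ((Sym2.mem_and_mem_iff hvne).1 ⟨hg3, hk4⟩)
    rw [← this]; exact hk
  by_cases h0 : S = ∅
  · right; rw [h0]; exact Set.ncard_empty _
  · left
    obtain ⟨e, he⟩ := Set.nonempty_iff_ne_empty.2 h0
    obtain ⟨heM, i, hei⟩ := he
    have hi : s(v i, v (i + 1)) ∈ M := hei ▸ heM
    have hi3 : s(v (i + 3), v (i + 4)) ∈ M := lemB i hi
    have hpair : S = {s(v i, v (i + 1)), s(v (i + 3), v (i + 4))} := by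
      ext f
      constructor
      · rintro ⟨hfM, j, rfl⟩
        by_cases hji : j = i
        · left; rw [hji]
        · have := lemA i j hi hfM (fun h => hji h.symm)
          right; rw [this, add_assoc, show (3 + 1 : Fin 6) = 4 from rfl]
          rfl
      · rintro (rfl | rfl)
        · exact ⟨hi, i, rfl⟩
        · refine ⟨hi3, i + 3, ?_⟩
          rw [add_assoc, show (3 + 1 : Fin 6) = 4 from rfl]
    rw [hpair]
    refine Set.ncard_pair ?_
    intro h
    have : v i ∈ s(v (i + 3), v (i + 4)) := h ▸ Sym2.mem_mk_left _ _
    rcases Sym2.mem_iff.1 this with h' | h'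
    · have := fne h'; omega
    · have := fne h'; omega
end

section
/- If a graph G has a dominating induced matching M and abcd is a diamond in G with mid-edge bc (i.e., vertices a,b,c,d with edges ab, ac, bc, bd, cd and non-edge ad), then bc ∈ M. -/
/-- The mid-edge of any diamond belongs to every dominating induced matching. -/
theorem dim_diamond_mid_edge {V : Type*} [Fintype V] (G : SimpleGraph V)
    (M : Set (Sym2 V)) (hM : IsDIM G M) (a b c d : V) (had : a ≠ d)
    (hab : G.Adj a b) (hac : G.Adj a c) (hbc : G.Adj b c)
    (hbd : G.Adj b d) (hcd : G.Adj c d) (nad : ¬ G.Adj a d) :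
    s(b, c) ∈ M := by
  by_contra hbcM
  obtain ⟨hsub, hind, hdom⟩ := hM
  obtain ⟨f, hf, u, huf, hufm⟩ := hdom s(b, c) (G.mem_edgeSet.mpr hbc)
  rw [Sym2.mem_iff] at huf
  rcases huf with rfl | rfl
  · -- b ∈ f
    have hcf : c ∉ f := fun hcf =>
      hbcM (((Sym2.mem_and_mem_iff hbc.ne).mp ⟨hufm, hcf⟩) ▸ hf)
    obtain ⟨g, hg, v, hvg, hvgm⟩ := hdom s(a, c) (G.mem_edgeSet.mpr hac)
    rw [Sym2.mem_iff] at hvg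
    by_cases hgf : f = g
    · -- then a ∈ f, so f = s(a,b)
      subst hgf
      have hva : v = a := by
        rcases hvg with rfl | rfl
        · rfl
        · exact absurd hvgm hcf
      have hfab : f = s(a, u) := (Sym2.mem_and_mem_iff hab.ne).mp ⟨hva ▸ hvgm, hufm⟩
      obtain ⟨h, hh, w, hwh, hwhm⟩ := hdom s(c, d) (G.mem_edgeSet.mpr hcd)
      have hhf : f ≠ h := by
        rintro rfl
        rw [Sym2.mem_iff] at hwh
        rcases hwh with rfl | rfl
        · exact hcf hwhm
        · rw [hfab, Sym2.mem_iff] at hwhm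
          rcases hwhm with rfl | rfl
          · exact had rfl
          · exact hbd.ne rfl
      have := (hind f hf h hh hhf u hufm w hwhm).2
      rw [Sym2.mem_iff] at hwh
      rcases hwh with rfl | rfl
      · exact this hbc
      · exact this hbd
    · have := (hind g hg f hf (Ne.symm hgf) v hvgm u hufm).2
      rcases hvg with rfl | rfl
      · exact this hab
      · exact this hbc.symm
  · -- c ∈ f
    have hbf : b ∉ f := fun hbf =>
      hbcM (((Sym2.mem_and_mem_iff hbc.ne).mp ⟨hbf, hufm⟩) ▸ hf)
    obtain ⟨g, hg, v, hvg, hvgm⟩ := hdom s(a, b) (G.mem_edgeSet.mpr hab)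
    rw [Sym2.mem_iff] at hvg
    by_cases hgf : f = g
    · subst hgf
      have hva : v = a := by
        rcases hvg with rfl | rfl
        · rfl
        · exact absurd hvgm hbf
      have hfac : f = s(a, u) := (Sym2.mem_and_mem_iff hac.ne).mp ⟨hva ▸ hvgm, hufm⟩
      obtain ⟨h, hh, w, hwh, hwhm⟩ := hdom s(b, d) (G.mem_edgeSet.mpr hbd)
      have hhf : f ≠ h := by
        rintro rfl
        rw [Sym2.mem_iff] at hwh
        rcases hwh with rfl | rfl
        · exact hbf hwhm
        · rw [hfac, Sym2.mem_iff] at hwhm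
          rcases hwhm with rfl | rfl
          · exact had rfl
          · exact hcd.ne rfl
      have := (hind f hf h hh hhf u hufm w hwhm).2
      rw [Sym2.mem_iff] at hwh
      rcases hwh with rfl | rfl
      · exact this hbc.symm
      · exact this hcd
    · have := (hind g hg f hf (Ne.symm hgf) v hvgm u hufm).2
      rcases hvg with rfl | rfl
      · exact this hac
      · exact this hbc
end

section
/- If a graph G has a dominating induced matching, then for every vertex v, the subgraph induced by N(v) contains no chordless path P_4 and no cycle; i.e., G[N(v)] is a P_4-free forest (a disjoint union of stars), and moreover at most one of these stars contains a P_3. -/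
lemma dim_key {V : Type*} (G : SimpleGraph V) (M : Set (Sym2 V))
    (hsub : M ⊆ G.edgeSet)
    (hind : ∀ e ∈ M, ∀ f ∈ M, e ≠ f → ∀ u ∈ e, ∀ v ∈ f, u ≠ v ∧ ¬ G.Adj u v)
    (hdom : ∀ e ∈ G.edgeSet, ∃ f ∈ M, ∃ u, u ∈ e ∧ u ∈ f) (v : V) :
    ∀ a b c : V, a ∈ G.neighborSet v → b ∈ G.neighborSet v → c ∈ G.neighborSet v →
      G.Adj a b → G.Adj b c → a ≠ c →
      ∀ a' b' c' : V, a' ∈ G.neighborSet v → b' ∈ G.neighborSet v → c' ∈ G.neighborSet v →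
      G.Adj a' b' → G.Adj b' c' → a' ≠ c' → b = b' := by
  by_cases hv : ∃ f ∈ M, v ∈ f
  · obtain ⟨f, hfM, hvf⟩ := hv
    obtain ⟨p, rfl⟩ : ∃ p, f = s(v, p) := ⟨Sym2.Mem.other hvf, (Sym2.other_spec hvf).symm⟩
    -- every edge inside the neighborhood contains p
    have hedge : ∀ x y : V, x ∈ G.neighborSet v → y ∈ G.neighborSet v →
        G.Adj x y → x = p ∨ y = p := by
      intro x y hx hy hxy
      obtain ⟨g, hgM, u, hu1, hu2⟩ := hdom _ (G.mem_edgeSet.mpr hxy)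
      have hgf : s(v, p) = g := by
        by_contra hne
        have hadj : G.Adj v u := by
          rcases Sym2.mem_iff.mp hu1 with rfl | rfl
          · exact hx
          · exact hy
        exact (hind _ hfM _ hgM hne v (Sym2.mem_mk_left v p) u hu2).2 hadj
      rw [← hgf] at hu2
      rcases Sym2.mem_iff.mp hu2 with rfl | rfl
      · rcases Sym2.mem_iff.mp hu1 with rfl | rfl
        · exact absurd hx (G.irrefl)
        · exact absurd hy (G.irrefl)
      · rcases Sym2.mem_iff.mp hu1 with rfl | rfl
        · exact Or.inl rfl
        · exact Or.inr rfl
    have hcenter : ∀ a b c : V, a ∈ G.neighborSet v → b ∈ G.neighborSet v →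
        c ∈ G.neighborSet v → G.Adj a b → G.Adj b c → a ≠ c → b = p := by
      intro a b c ha hb hc hab hbc hac
      rcases hedge a b ha hb hab with rfl | rfl
      · rcases hedge a b ha hb hab with h1 | h1
        · rcases hedge b c hb hc hbc with h2 | h2
          · exact h2
          · exact absurd (h1.trans h2.symm) hac
        · exact h1
      · rfl
    intro a b c ha hb hc hab hbc hac a' b' c' ha' hb' hc' hab' hbc' hac'
    rw [hcenter a b c ha hb hc hab hbc hac, hcenter a' b' c' ha' hb' hc' hab' hbc' hac']
  · push_neg at hv
    have matched : ∀ x : V, x ∈ G.neighborSet v → ∃ g ∈ M, x ∈ g := by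
      intro x hx
      obtain ⟨g, hgM, u, hu1, hu2⟩ := hdom _ (G.mem_edgeSet.mpr (hx : G.Adj v x))
      rcases Sym2.mem_iff.mp hu1 with rfl | rfl
      · exact absurd hu2 (hv g hgM)
      · exact ⟨g, hgM, hu2⟩
    intro a b c ha hb hc hab hbc hac a' b' c' ha' hb' hc' hab' hbc' hac'
    exfalso
    obtain ⟨ga, hgaM, hga⟩ := matched a ha
    obtain ⟨gb, hgbM, hgb⟩ := matched b hb
    obtain ⟨gc, hgcM, hgc⟩ := matched c hc
    have hab2 : ga = gb := by
      by_contra hne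
      exact (hind _ hgaM _ hgbM hne a hga b hgb).2 hab
    have hbc2 : gb = gc := by
      by_contra hne
      exact (hind _ hgbM _ hgcM hne b hgb c hgc).2 hbc
    have hga' : ga = s(a, b) := ((Sym2.mem_and_mem_iff hab.ne).mp ⟨hga, hab2 ▸ hgb⟩)
    have : c ∈ s(a, b) := by rw [← hga', hab2, hbc2]; exact hgc
    rcases Sym2.mem_iff.mp this with rfl | rfl
    · exact hac rfl
    · exact hbc.ne rfl

/-- If a graph has a dominating induced matching then every neighborhood induces a
P₄-free forest (a disjoint union of stars), at most one star of which contains a P₃: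
no induced P₄, no cycle, and all induced P₃'s in the neighborhood share their center. -/
theorem dim_neighborhood_structure {V : Type*} [Fintype V] (G : SimpleGraph V)
    (h : ∃ M, IsDIM G M) (v : V) :
    (¬ ∃ a b c d : V, a ∈ G.neighborSet v ∧ b ∈ G.neighborSet v ∧
        c ∈ G.neighborSet v ∧ d ∈ G.neighborSet v ∧
        a ≠ c ∧ a ≠ d ∧ b ≠ d ∧
        G.Adj a b ∧ G.Adj b c ∧ G.Adj c d ∧
        ¬ G.Adj a c ∧ ¬ G.Adj a d ∧ ¬ G.Adj b d) ∧
    (G.induce (G.neighborSet v)).IsAcyclic ∧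
    (∀ a b c a' b' c' : V, a ∈ G.neighborSet v → b ∈ G.neighborSet v →
        c ∈ G.neighborSet v → a' ∈ G.neighborSet v → b' ∈ G.neighborSet v →
        c' ∈ G.neighborSet v →
        G.Adj a b → G.Adj b c → ¬ G.Adj a c → a ≠ c →
        G.Adj a' b' → G.Adj b' c' → ¬ G.Adj a' c' → a' ≠ c' →
        b = b') := by
  obtain ⟨M, hsub, hind, hdom⟩ := h
  have key := dim_key G M hsub hind hdom v
  refine ⟨?_, ?_, ?_⟩
  · rintro ⟨a, b, c, d, ha, hb, hc, hd, hac, had, hbd, hab, hbc, hcd, -, -, -⟩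
    exact hbc.ne (key a b c ha hb hc hab hbc hac b c d hb hc hd hbc hcd hbd)
  · intro u p hp
    match p with
    | .nil => exact hp.ne_nil rfl
    | .cons h₁ .nil => simpa using hp.three_le_length
    | .cons h₁ (.cons h₂ .nil) => simpa using hp.three_le_length
    | .cons (v := w) h₁ (.cons (v := x) h₂ (.cons (v := y) h₃ q')) =>
      have hnd := hp.support_nodup
      simp only [SimpleGraph.Walk.support_cons, List.tail_cons, List.nodup_cons] at hnd
      obtain ⟨hw, hx, -⟩ := hnd
      have hwx : w ≠ x := fun e => hw (by simp [e])
      have hwy : w ≠ y := fun e => hw (by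
        simp only [List.mem_cons]
        exact Or.inr (e ▸ q'.start_mem_support))
      have hxu : x ≠ u := fun e => hx (e ▸ q'.end_mem_support)
      have h₁' : G.Adj ↑u ↑w := h₁
      have h₂' : G.Adj ↑w ↑x := h₂
      have h₃' : G.Adj ↑x ↑y := h₃
      have := key ↑u ↑w ↑x u.2 w.2 x.2 h₁' h₂'
        (fun e => hxu (Subtype.ext e.symm)) ↑w ↑x ↑y w.2 x.2 y.2 h₂' h₃'
        (fun e => hwy (Subtype.ext e))
      exact h₂'.ne this
  · intro a b c a' b' c' ha hb hc ha' hb' hc' hab hbc _ hac hab' hbc' _ hac'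
    exact key a b c ha hb hc hab hbc hac a' b' c' ha' hb' hc' hab' hbc' hac'
end

section
/- If a graph G has a dominating induced matching, then G contains no induced W_4, where W_4 consists of a chordless C_4 plus a vertex adjacent to all four cycle vertices. -/
/-- A graph having a dominating induced matching contains no induced W₄
(a chordless C₄ together with a vertex adjacent to all four cycle vertices). -/
theorem dim_W4_free {V : Type*} [Fintype V] (G : SimpleGraph V)
    (h : ∃ M, IsDIM G M) :
    ¬ ∃ u v₁ v₂ v₃ v₄ : V, v₁ ≠ v₃ ∧ v₂ ≠ v₄ ∧
      G.Adj v₁ v₂ ∧ G.Adj v₂ v₃ ∧ G.Adj v₃ v₄ ∧ G.Adj v₄ v₁ ∧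
      ¬ G.Adj v₁ v₃ ∧ ¬ G.Adj v₂ v₄ ∧
      G.Adj u v₁ ∧ G.Adj u v₂ ∧ G.Adj u v₃ ∧ G.Adj u v₄ := by
  obtain ⟨M, hME, hInd, hDom⟩ := h
  rintro ⟨u, v₁, v₂, v₃, v₄, h13, h24, a12, a23, a34, a41, n13, n24, au1, au2, au3, au4⟩
  have eqOfAdj : ∀ e ∈ M, ∀ f ∈ M, ∀ x ∈ e, ∀ y ∈ f, G.Adj x y → e = f := by
    intro e he f hf x hx y hy hxy
    by_contra hne
    exact (hInd e he f hf hne x hx y hy).2 hxy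
  by_cases hu : ∃ f ∈ M, u ∈ f
  · obtain ⟨f, hf, huf⟩ := hu
    obtain ⟨g, hg, y, hyE, hyg⟩ := hDom s(v₂, v₃) (G.mem_edgeSet.mpr a23)
    have hyuv : G.Adj u y := by
      rcases Sym2.mem_iff.mp hyE with rfl | rfl
      · exact au2
      · exact au3
    have hfg : f = g := eqOfAdj f hf g hg u huf y hyg hyuv
    obtain ⟨g', hg', z, hzE, hzg'⟩ := hDom s(v₄, v₁) (G.mem_edgeSet.mpr a41)
    have hzuv : G.Adj u z := by
      rcases Sym2.mem_iff.mp hzE with rfl | rfl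
      · exact au4
      · exact au1
    have hfg' : f = g' := eqOfAdj f hf g' hg' u huf z hzg' hzuv
    have hfeq : f = s(u, y) := (Sym2.mem_and_mem_iff hyuv.ne).mp ⟨huf, hfg ▸ hyg⟩
    have hz : z ∈ f := hfg' ▸ hzg'
    rw [hfeq, Sym2.mem_iff] at hz
    rcases hz with rfl | rfl
    · exact hzuv.ne rfl
    · rcases Sym2.mem_iff.mp hyE with rfl | rfl <;>
        rcases Sym2.mem_iff.mp hzE with h' | h'
      · exact h24 h'
      · exact a12.ne' h'
      · exact a34.ne h'
      · exact h13 h'.symm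
  · push_neg at hu
    have key : ∀ w : V, G.Adj u w → ∃ f ∈ M, w ∈ f := by
      intro w hw
      obtain ⟨f, hf, x, hxE, hxf⟩ := hDom s(u, w) (G.mem_edgeSet.mpr hw)
      rcases Sym2.mem_iff.mp hxE with rfl | rfl
      · exact absurd hxf (hu f hf)
      · exact ⟨f, hf, hxf⟩
    obtain ⟨f, hf, h1f⟩ := key v₁ au1
    obtain ⟨k, hk, h2k⟩ := key v₂ au2
    obtain ⟨l, hl, h3l⟩ := key v₃ au3
    have hfk : f = k := eqOfAdj f hf k hk v₁ h1f v₂ h2k a12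
    have hkl : k = l := eqOfAdj k hk l hl v₂ h2k v₃ h3l a23
    have h3f : v₃ ∈ f := (hfk.trans hkl) ▸ h3l
    have : f = s(v₁, v₃) := (Sym2.mem_and_mem_iff h13).mp ⟨h1f, h3f⟩
    exact n13 (G.mem_edgeSet.mp (this ▸ hME hf))
end

section
/- If a graph G has a dominating induced matching, then G contains no induced gem, where the gem consists of a chordless P_4 plus a vertex adjacent to all four path vertices. -/
/-- A graph having a dominating induced matching contains no induced gem
(a chordless P₄ together with a vertex adjacent to all four path vertices). -/
theorem dim_gem_free {V : Type*} [Fintype V] (G : SimpleGraph V)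
    (h : ∃ M, IsDIM G M) :
    ¬ ∃ u v₁ v₂ v₃ v₄ : V, v₁ ≠ v₃ ∧ v₁ ≠ v₄ ∧ v₂ ≠ v₄ ∧
      G.Adj v₁ v₂ ∧ G.Adj v₂ v₃ ∧ G.Adj v₃ v₄ ∧
      ¬ G.Adj v₁ v₃ ∧ ¬ G.Adj v₁ v₄ ∧ ¬ G.Adj v₂ v₄ ∧
      G.Adj u v₁ ∧ G.Adj u v₂ ∧ G.Adj u v₃ ∧ G.Adj u v₄ := by
  rintro ⟨u, v₁, v₂, v₃, v₄, h13, h14, h24, a12, a23, a34, n13, n14, n24,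
    au1, au2, au3, au4⟩
  obtain ⟨M, hMe, hInd, hDom⟩ := h
  -- White vertices: those covered by M.
  set White : V → Prop := fun w => ∃ e ∈ M, w ∈ e with hW
  -- Every edge has a white endpoint.
  have lemA : ∀ a b : V, G.Adj a b → White a ∨ White b := by
    intro a b hab
    obtain ⟨f, hf, x, hxe, hxf⟩ := hDom s(a, b) (G.mem_edgeSet.mpr hab)
    rcases Sym2.mem_iff.mp hxe with rfl | rfl
    · exact Or.inl ⟨f, hf, hxf⟩
    · exact Or.inr ⟨f, hf, hxf⟩
  -- A white vertex has at most one white neighbor.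
  have uniq : ∀ w x y : V, White w → G.Adj w x → White x → G.Adj w y →
      White y → x = y := by
    intro w x y ⟨e, he, hwe⟩ hwx ⟨f, hf, hxf⟩ hwy ⟨g, hg, hyg⟩
    have hef : e = f := by
      by_contra hne
      exact (hInd e he f hf hne w hwe x hxf).2 hwx
    have heg : e = g := by
      by_contra hne
      exact (hInd e he g hg hne w hwe y hyg).2 hwy
    subst hef; subst heg
    have hx : e = s(w, x) :=
      (Sym2.mem_and_mem_iff hwx.ne).mp ⟨hwe, hxf⟩
    have hy : e = s(w, y) :=
      (Sym2.mem_and_mem_iff hwy.ne).mp ⟨hwe, hyg⟩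
    exact Sym2.congr_right.mp (hx ▸ hy)
  by_cases hu : White u
  · -- u white: the white endpoints of v₁v₂ and v₃v₄ are both its unique
    -- white neighbor, contradiction.
    have h23 : v₂ ≠ v₃ := a23.ne
    rcases lemA v₁ v₂ a12 with h1 | h2 <;> rcases lemA v₃ v₄ a34 with h3 | h4
    · exact h13 (uniq u v₁ v₃ hu au1 h1 au3 h3)
    · exact h14 (uniq u v₁ v₄ hu au1 h1 au4 h4)
    · exact h23 (uniq u v₂ v₃ hu au2 h2 au3 h3)
    · exact h24 (uniq u v₂ v₄ hu au2 h2 au4 h4)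
  · -- u black: v₁, v₂, v₃ white; v₂ has two distinct white neighbors.
    have h1 : White v₁ := (lemA u v₁ au1).resolve_left hu
    have h2 : White v₂ := (lemA u v₂ au2).resolve_left hu
    have h3 : White v₃ := (lemA u v₃ au3).resolve_left hu
    exact h13 (uniq v₂ v₁ v₃ h2 a12.symm h1 a23 h3)
end

section
/- If a graph G has a dominating induced matching and H is a homogeneous set in G containing at least one edge, then N(H) is a stable (independent) set. -/
/-- `H` is a homogeneous set of `G`: a proper vertex subset with at least two
elements such that every outside vertex sees all of `H` or none of `H`. -/
def IsHomogeneous {V : Type*} (G : SimpleGraph V) (H : Set V) : Prop :=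
  2 ≤ H.ncard ∧ H ≠ Set.univ ∧
  ∀ v ∉ H, (∀ h ∈ H, G.Adj v h) ∨ (∀ h ∈ H, ¬ G.Adj v h)

/-- The outside neighborhood of a vertex set `H`. -/
def homNbhd {V : Type*} (G : SimpleGraph V) (H : Set V) : Set V :=
  {v | v ∉ H ∧ ∃ h ∈ H, G.Adj v h}

/-!
A dominating induced matching `M` forces `G` to be `K₄`-free: any two vertices of a clique are
equal or adjacent, so all edges of `M` meeting a clique coincide, and that single edge of `M`
would have to cover all edges of the clique, while no two vertices cover the edges of a `K₄`.
If `H` contains an edge `xy`, two adjacent vertices `a b` of `N(H)` are complete to `{x, y}`,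
and `{a, b, x, y}` would be a `K₄`.
-/

theorem SimpleGraph.IsNClique.exists_adj_notMem_of_four {V : Type*} {G : SimpleGraph V}
    {s : Finset V} (hs : G.IsNClique 4 s) (f : Sym2 V) :
    ∃ r ∈ s, ∃ t ∈ s, G.Adj r t ∧ r ∉ f ∧ t ∉ f := by
  classical
  induction f using Sym2.ind with
  | h p q =>
    have hcard : 1 < (s \ {p, q}).card := by
      have := Finset.le_card_sdiff {p, q} s
      have := Finset.card_le_two (a := p) (b := q)
      rw [hs.card_eq] at *
      omega
    obtain ⟨r, hr, t, ht, hrt⟩ := Finset.one_lt_card.1 hcard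
    rw [Finset.mem_sdiff, Finset.mem_insert, Finset.mem_singleton] at hr ht
    exact ⟨r, hr.1, t, ht.1, hs.isClique hr.1 ht.1 hrt,
      by simpa only [Sym2.mem_iff] using hr.2, by simpa only [Sym2.mem_iff] using ht.2⟩

namespace IsDIM

variable {V : Type*} {G : SimpleGraph V} {M : Set (Sym2 V)}

theorem exists_mem_of_adj (hM : IsDIM G M) {u v : V} (huv : G.Adj u v) :
    ∃ f ∈ M, u ∈ f ∨ v ∈ f := by
  obtain ⟨f, hf, w, hw, hwf⟩ := hM.2.2 s(u, v) huv
  rcases Sym2.mem_iff.1 hw with rfl | rfl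
  exacts [⟨f, hf, .inl hwf⟩, ⟨f, hf, .inr hwf⟩]

theorem eq_of_mem_of_isClique (hM : IsDIM G M) {s : Set V} (hs : G.IsClique s)
    {e f : Sym2 V} (he : e ∈ M) (hf : f ∈ M) {u v : V} (hus : u ∈ s) (hvs : v ∈ s)
    (hu : u ∈ e) (hv : v ∈ f) : e = f := by
  by_contra hne
  have hfar := hM.2.1 e he f hf hne u hu v hv
  by_cases huv : u = v
  exacts [hfar.1 huv, hfar.2 (hs hus hvs huv)]

theorem cliqueFree_four (hM : IsDIM G M) : G.CliqueFree 4 := by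
  intro s hs
  have hclique : G.IsClique (s : Set V) := hs.isClique
  obtain ⟨a, ha, b, hb, hab⟩ := Finset.one_lt_card.1 (by rw [hs.card_eq]; norm_num)
  obtain ⟨f, hf, v, hvs, hvf⟩ : ∃ f ∈ M, ∃ v ∈ s, v ∈ f := by
    obtain ⟨f, hf, haf | hbf⟩ := hM.exists_mem_of_adj (hclique ha hb hab)
    exacts [⟨f, hf, a, ha, haf⟩, ⟨f, hf, b, hb, hbf⟩]
  obtain ⟨r, hr, t, ht, hrt, hrf, htf⟩ := hs.exists_adj_notMem_of_four f
  obtain ⟨g, hg, hrg | htg⟩ := hM.exists_mem_of_adj hrt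
  · exact hrf (hM.eq_of_mem_of_isClique hclique hg hf hr hvs hrg hvf ▸ hrg)
  · exact htf (hM.eq_of_mem_of_isClique hclique hg hf ht hvs htg hvf ▸ htg)

end IsDIM

theorem IsHomogeneous.adj_of_mem_homNbhd {V : Type*} {G : SimpleGraph V} {H : Set V}
    (hH : IsHomogeneous G H) {v : V} (hv : v ∈ homNbhd G H) {h : V} (hh : h ∈ H) :
    G.Adj v h := by
  obtain ⟨hvH, h₀, hh₀, hvh₀⟩ := hv
  exact (hH.2.2 v hvH).resolve_right (fun hnone => hnone h₀ hh₀ hvh₀) h hh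

theorem dim_hom_edge_nbhd_stable_general {V : Type*} (G : SimpleGraph V)
    (h : ∃ M, IsDIM G M) (H : Set V)
    (hH : IsHomogeneous G H) (hedge : ∃ a ∈ H, ∃ b ∈ H, G.Adj a b) :
    ∀ a ∈ homNbhd G H, ∀ b ∈ homNbhd G H, ¬ G.Adj a b := by
  classical
  obtain ⟨M, hM⟩ := h
  obtain ⟨x, hx, y, hy, hxy⟩ := hedge
  intro a ha b hb hab
  have hbxy : G.IsNClique 3 {b, x, y} := SimpleGraph.is3Clique_triple_iff.2
    ⟨hH.adj_of_mem_homNbhd hb hx, hH.adj_of_mem_homNbhd hb hy, hxy⟩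
  have habxy : G.IsNClique 4 {a, b, x, y} := hbxy.insert <| by
    simpa [hab] using ⟨hH.adj_of_mem_homNbhd ha hx, hH.adj_of_mem_homNbhd ha hy⟩
  exact hM.cliqueFree_four _ habxy

/-- In a connected graph with a dominating induced matching, the neighborhood of a
homogeneous set containing an edge is stable. -/
theorem dim_hom_edge_nbhd_stable {V : Type*} [Fintype V] (G : SimpleGraph V)
    (hconn : G.Connected) (h : ∃ M, IsDIM G M) (H : Set V)
    (hH : IsHomogeneous G H) (hedge : ∃ a ∈ H, ∃ b ∈ H, G.Adj a b) :
    ∀ a ∈ homNbhd G H, ∀ b ∈ homNbhd G H, ¬ G.Adj a b :=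
  dim_hom_edge_nbhd_stable_general G h H hH hedge
end

section
/- If a graph G has a dominating induced matching and H is a homogeneous set in G with |N(H)| ≥ 2, then H is either a stable set or G[H] is a disjoint union of edges (a perfect matching on H). -/
def matchedVerts {V : Type*} (M : Set (Sym2 V)) : Set V := {v | ∃ e ∈ M, v ∈ e}

theorem exists_mk_mem_of_mem_matchedVerts {V : Type*} {M : Set (Sym2 V)} {u : V}
    (hu : u ∈ matchedVerts M) : ∃ x, s(u, x) ∈ M := by
  obtain ⟨e, he, hue⟩ := hu
  exact ⟨Sym2.Mem.other hue, (Sym2.other_spec hue).symm ▸ he⟩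

namespace IsDIM

variable {V : Type*} {G : SimpleGraph V} {M : Set (Sym2 V)} {u v x : V}

theorem mem_or_mem_of_adj (hM : IsDIM G M) (huv : G.Adj u v) :
    u ∈ matchedVerts M ∨ v ∈ matchedVerts M := by
  obtain ⟨f, hf, w, hw, hwf⟩ := hM.2.2 s(u, v) huv
  rcases Sym2.mem_iff.1 hw with rfl | rfl
  exacts [Or.inl ⟨f, hf, hwf⟩, Or.inr ⟨f, hf, hwf⟩]

theorem adj_of_mk_mem (hM : IsDIM G M) (hux : s(u, x) ∈ M) : G.Adj u x :=
  hM.1 hux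

theorem eq_of_mk_mem_of_adj (hM : IsDIM G M) (hux : s(u, x) ∈ M) (huv : G.Adj u v)
    (hv : v ∈ matchedVerts M) : v = x := by
  obtain ⟨f, hf, hvf⟩ := hv
  have hfe : f = s(u, x) := by
    by_contra hne
    exact (hM.2.1 f hf _ hux hne v hvf u (Sym2.mem_mk_left u x)).2 huv.symm
  rw [hfe] at hvf
  exact (Sym2.mem_iff.1 hvf).resolve_left huv.ne'

end IsDIM

namespace IsHomogeneous

variable {V : Type*} {G : SimpleGraph V} {H : Set V} {v w : V}

theorem adj_of_mem_homNbhd_s11 (hH : IsHomogeneous G H) (hv : v ∈ homNbhd G H) (hw : w ∈ H) :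
    G.Adj v w := by
  obtain ⟨hvH, h₀, hh₀, hvh₀⟩ := hv
  exact (hH.2.2 v hvH).resolve_right (fun hnone ↦ hnone h₀ hh₀ hvh₀) w hw

variable {M : Set (Sym2 V)}

theorem exists_mk_mem_of_adj (hM : IsDIM G M) (hH : IsHomogeneous G H)
    (hN : 2 ≤ (homNbhd G H).ncard) {a b : V} (ha : a ∈ H) (hb : b ∈ H) (hab : G.Adj a b) :
    ∃ u ∈ H, ∃ x ∈ H, s(u, x) ∈ M := by
  obtain ⟨u, huH, w, hwH, huw, hu⟩ : ∃ u ∈ H, ∃ w ∈ H, G.Adj u w ∧ u ∈ matchedVerts M := by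
    rcases hM.mem_or_mem_of_adj hab with h | h
    exacts [⟨a, ha, b, hb, hab, h⟩, ⟨b, hb, a, ha, hab.symm, h⟩]
  obtain ⟨x, hux⟩ := exists_mk_mem_of_mem_matchedVerts hu
  refine ⟨u, huH, x, ?_, hux⟩
  by_contra hxH
  obtain ⟨y, hyN, hyx⟩ := Set.exists_ne_of_one_lt_ncard (s := homNbhd G H) (by omega) x
  have hy : y ∉ matchedVerts M := fun hy ↦
    hyx (hM.eq_of_mk_mem_of_adj hux (hH.adj_of_mem_homNbhd_s11 hyN huH).symm hy)
  have hw : w ∈ matchedVerts M :=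
    (hM.mem_or_mem_of_adj (hH.adj_of_mem_homNbhd_s11 hyN hwH)).resolve_left hy
  exact hxH (hM.eq_of_mk_mem_of_adj hux huw hw ▸ hwH)

theorem disjoint_homNbhd_matchedVerts (hM : IsDIM G M) (hH : IsHomogeneous G H) {u x : V}
    (hu : u ∈ H) (hx : x ∈ H) (hux : s(u, x) ∈ M) : Disjoint (homNbhd G H) (matchedVerts M) :=
  Set.disjoint_left.2 fun _ hv hvM ↦
    hv.1 (hM.eq_of_mk_mem_of_adj hux (hH.adj_of_mem_homNbhd_s11 hv hu).symm hvM ▸ hx)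

theorem existsUnique_adj_of_disjoint_matchedVerts (hM : IsDIM G M) (hH : IsHomogeneous G H)
    (hv : v ∈ homNbhd G H) (hdisj : Disjoint (homNbhd G H) (matchedVerts M)) :
    ∀ a ∈ H, ∃! b, b ∈ H ∧ G.Adj a b := by
  have matched : ∀ c ∈ H, c ∈ matchedVerts M := fun c hc ↦
    (hM.mem_or_mem_of_adj (hH.adj_of_mem_homNbhd_s11 hv hc)).resolve_left
      (Set.disjoint_left.1 hdisj hv)
  intro a ha
  obtain ⟨b, hab⟩ := exists_mk_mem_of_mem_matchedVerts (matched a ha)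
  have hbH : b ∈ H := by
    by_contra hbH
    exact Set.disjoint_left.1 hdisj ⟨hbH, a, ha, (hM.adj_of_mk_mem hab).symm⟩
      ⟨_, hab, Sym2.mem_mk_right a b⟩
  exact ⟨b, ⟨hbH, hM.adj_of_mk_mem hab⟩, fun c ⟨hcH, hac⟩ ↦
    hM.eq_of_mk_mem_of_adj hab hac (matched c hcH)⟩

end IsHomogeneous

theorem dim_hom_two_nbrs_structure_general {V : Type*} (G : SimpleGraph V)
    (h : ∃ M, IsDIM G M) (H : Set V) (hH : IsHomogeneous G H)
    (hN : 2 ≤ (homNbhd G H).ncard) :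
    (∀ a ∈ H, ∀ b ∈ H, ¬ G.Adj a b) ∨
    (∀ a ∈ H, ∃! b, b ∈ H ∧ G.Adj a b) := by
  obtain ⟨M, hM⟩ := h
  by_cases hstable : ∀ a ∈ H, ∀ b ∈ H, ¬ G.Adj a b
  · exact Or.inl hstable
  obtain ⟨a, ha, b, hb, hab⟩ : ∃ a ∈ H, ∃ b ∈ H, G.Adj a b := by simpa using hstable
  obtain ⟨u, hu, x, hx, hux⟩ := hH.exists_mk_mem_of_adj hM hN ha hb hab
  obtain ⟨v, hv⟩ := Set.nonempty_of_ncard_ne_zero (s := homNbhd G H) (by omega)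
  exact Or.inr <| hH.existsUnique_adj_of_disjoint_matchedVerts hM hv
    (hH.disjoint_homNbhd_matchedVerts hM hu hx hux)

/-- In a graph with a dominating induced matching, a homogeneous set with at least
two outside neighbors is stable or induces a disjoint union of edges. -/
theorem dim_hom_two_nbrs_structure {V : Type*} [Fintype V] (G : SimpleGraph V)
    (h : ∃ M, IsDIM G M) (H : Set V) (hH : IsHomogeneous G H)
    (hN : 2 ≤ (homNbhd G H).ncard) :
    (∀ a ∈ H, ∀ b ∈ H, ¬ G.Adj a b) ∨
    (∀ a ∈ H, ∃! b, b ∈ H ∧ G.Adj a b) :=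
  dim_hom_two_nbrs_structure_general G h H hH hN
end

section
/- If G is a graph having a dominating induced matching and the complement of G is disconnected, then G is P_4-free (a cograph). -/
namespace SimpleGraph

variable {V : Type*} {G : SimpleGraph V}

theorem exists_not_reachable_of_not_connected (hG : ¬G.Connected) (v : V) :
    ∃ w, ¬G.Reachable v w := by
  by_contra! h
  exact hG (G.connected_iff_exists_forall_reachable.2 ⟨v, h⟩)

theorem reachable_compl_of_not_adj {u v : V} (hne : u ≠ v) (huv : ¬G.Adj u v) :
    Gᶜ.Reachable u v :=
  ((G.compl_adj u v).2 ⟨hne, huv⟩).reachable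

theorem adj_of_reachable_compl_of_not_reachable_compl {u v w : V} (hu : Gᶜ.Reachable v u)
    (hw : ¬Gᶜ.Reachable v w) : G.Adj u w := by
  simpa using (Gᶜ.reachable_or_compl_adj u w).resolve_left fun huw ↦ hw (hu.trans huw)

end SimpleGraph

namespace IsDIM

variable {V : Type*} {G : SimpleGraph V} {M : Set (Sym2 V)}

theorem matched_or_matched_of_adj (hM : IsDIM G M) {u v : V} (huv : G.Adj u v) :
    (∃ e ∈ M, u ∈ e) ∨ (∃ e ∈ M, v ∈ e) := by
  obtain ⟨f, hf, x, hx, hxf⟩ := hM.2.2 s(u, v) huv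
  rcases Sym2.mem_iff.1 hx with rfl | rfl
  exacts [.inl ⟨f, hf, hxf⟩, .inr ⟨f, hf, hxf⟩]

theorem eq_of_adj_of_mem_of_mem (hM : IsDIM G M) {u v : V} {e f : Sym2 V} (huv : G.Adj u v)
    (he : e ∈ M) (hf : f ∈ M) (hue : u ∈ e) (hvf : v ∈ f) : e = f := by
  by_contra hef
  exact (hM.2.1 e he f hf hef u hue v hvf).2 huv

theorem eq_of_adj_of_adj (hM : IsDIM G M) {u v w : V} (hu : ∃ e ∈ M, u ∈ e)
    (hv : ∃ e ∈ M, v ∈ e) (hw : ∃ e ∈ M, w ∈ e) (huv : G.Adj u v) (hvw : G.Adj v w) :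
    u = w := by
  obtain ⟨e, he, hue⟩ := hu
  obtain ⟨f, hf, hvf⟩ := hv
  obtain ⟨g, hg, hwg⟩ := hw
  have hef : e = f := hM.eq_of_adj_of_mem_of_mem huv he hf hue hvf
  have hfg : f = g := hM.eq_of_adj_of_mem_of_mem hvw hf hg hvf hwg
  have hf_eq : f = s(u, v) := (Sym2.mem_and_mem_iff huv.ne).1 ⟨hef ▸ hue, hvf⟩
  rw [← hfg, hf_eq, Sym2.mem_iff] at hwg
  exact (hwg.resolve_right hvw.ne').symm

end IsDIM

theorem dim_co_disconnected_cograph_general {V : Type*} (G : SimpleGraph V)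
    (h : ∃ M, IsDIM G M) (hcc : ¬ Gᶜ.Connected) :
    ¬ ∃ a b c d : V, a ≠ c ∧ a ≠ d ∧ b ≠ d ∧
      G.Adj a b ∧ G.Adj b c ∧ G.Adj c d ∧
      ¬ G.Adj a c ∧ ¬ G.Adj a d ∧ ¬ G.Adj b d := by
  rintro ⟨a, b, c, d, hac, had, hbd, hab, hbc, hcd, nac, nad, nbd⟩
  obtain ⟨M, hM⟩ := h
  obtain ⟨w, hw⟩ := SimpleGraph.exists_not_reachable_of_not_connected hcc a
  have hrc := SimpleGraph.reachable_compl_of_not_adj hac nac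
  have hrd := SimpleGraph.reachable_compl_of_not_adj had nad
  have hrb := hrd.trans (SimpleGraph.reachable_compl_of_not_adj hbd nbd).symm
  have haw := SimpleGraph.adj_of_reachable_compl_of_not_reachable_compl .rfl hw
  have hbw := SimpleGraph.adj_of_reachable_compl_of_not_reachable_compl hrb hw
  have hcw := SimpleGraph.adj_of_reachable_compl_of_not_reachable_compl hrc hw
  have hdw := SimpleGraph.adj_of_reachable_compl_of_not_reachable_compl hrd hw
  by_cases hmw : ∃ e ∈ M, w ∈ e
  · rcases hM.matched_or_matched_of_adj hab with hma | hmb <;>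
      rcases hM.matched_or_matched_of_adj hcd with hmc | hmd
    · exact hac (hM.eq_of_adj_of_adj hma hmw hmc haw hcw.symm)
    · exact had (hM.eq_of_adj_of_adj hma hmw hmd haw hdw.symm)
    · exact hbc.ne (hM.eq_of_adj_of_adj hmb hmw hmc hbw hcw.symm)
    · exact hbd (hM.eq_of_adj_of_adj hmb hmw hmd hbw hdw.symm)
  · have hma := (hM.matched_or_matched_of_adj haw).resolve_right hmw
    have hmb := (hM.matched_or_matched_of_adj hbw).resolve_right hmw
    have hmc := (hM.matched_or_matched_of_adj hcw).resolve_right hmw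
    exact hac (hM.eq_of_adj_of_adj hma hmb hmc hab hbc)

/-- If a graph with a dominating induced matching has a disconnected complement,
then it is P₄-free (a cograph). -/
theorem dim_co_disconnected_cograph {V : Type*} [Fintype V] (G : SimpleGraph V)
    (h : ∃ M, IsDIM G M) (hcc : ¬ Gᶜ.Connected) :
    ¬ ∃ a b c d : V, a ≠ c ∧ a ≠ d ∧ b ≠ d ∧
      G.Adj a b ∧ G.Adj b c ∧ G.Adj c d ∧
      ¬ G.Adj a c ∧ ¬ G.Adj a d ∧ ¬ G.Adj b d :=
  dim_co_disconnected_cograph_general G h hcc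
end

section
/- A connected cograph G has a dominating induced matching if and only if G is a super-star or G is the join of a disjoint union of edges with a stable set. (A super-star is a graph with a universal vertex u such that G − u is the disjoint union of one star and a stable set.) -/
/-- `G` is a super-star: it has a universal vertex `u` such that the subgraph
induced on the remaining vertices is the disjoint union of a star and a stable set
(equivalently, all its edges are incident to one common vertex `c`). -/
def IsSuperStar {V : Type*} (G : SimpleGraph V) : Prop :=
  ∃ u c : V, (∀ v, v ≠ u → G.Adj u v) ∧
    ∀ a b, a ≠ u → b ≠ u → G.Adj a b → (a = c ∨ b = c)

/-- `G` is the join of a disjoint union of edges (a perfectly matched set `A`)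
with a stable set `B`. -/
def IsJoinOfMatchingAndStable {V : Type*} (G : SimpleGraph V) : Prop :=
  ∃ A B : Set V, A ∪ B = Set.univ ∧ Disjoint A B ∧
    (∀ a ∈ A, ∃! b, b ∈ A ∧ G.Adj a b) ∧
    (∀ b₁ ∈ B, ∀ b₂ ∈ B, ¬ G.Adj b₁ b₂) ∧
    (∀ a ∈ A, ∀ b ∈ B, G.Adj a b)

private lemma walk_aux {V : Type*} {G : SimpleGraph V}
    (hP4 : ¬ ∃ a b c d : V, a ≠ c ∧ a ≠ d ∧ b ≠ d ∧
      G.Adj a b ∧ G.Adj b c ∧ G.Adj c d ∧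
      ¬ G.Adj a c ∧ ¬ G.Adj a d ∧ ¬ G.Adj b d) :
    ∀ {a b : V}, G.Walk a b → a = b ∨ G.Adj a b ∨ ∃ w, G.Adj a w ∧ G.Adj w b := by
  intro a b p
  induction p with
  | nil => exact Or.inl rfl
  | @cons a a' b h p ih =>
    right
    rcases ih with rfl | hadj | ⟨w, hw1, hw2⟩
    · exact Or.inl h
    · exact Or.inr ⟨a', h, hadj⟩
    · by_cases hab : G.Adj a b
      · exact Or.inl hab
      by_cases haw : G.Adj a w
      · exact Or.inr ⟨w, haw, hw2⟩
      by_cases ha'b : G.Adj a' b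
      · exact Or.inr ⟨a', h, ha'b⟩
      by_cases haeb : a = b
      · subst haeb
        exact Or.inr ⟨a', h, h.symm⟩
      exfalso
      apply hP4
      refine ⟨a, a', w, b, ?_, haeb, ?_, h, hw1, hw2, haw, hab, ha'b⟩
      · rintro rfl; exact hab hw2
      · rintro rfl; exact hab h

private lemma dist2 {V : Type*} {G : SimpleGraph V} (hconn : G.Connected)
    (hP4 : ¬ ∃ a b c d : V, a ≠ c ∧ a ≠ d ∧ b ≠ d ∧
      G.Adj a b ∧ G.Adj b c ∧ G.Adj c d ∧
      ¬ G.Adj a c ∧ ¬ G.Adj a d ∧ ¬ G.Adj b d) :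
    ∀ a b : V, a ≠ b → G.Adj a b ∨ ∃ w, G.Adj a w ∧ G.Adj w b := fun a b hab =>
  (walk_aux hP4 (hconn.preconnected a b).some).resolve_left hab

private lemma singleDIM {V : Type*} {G : SimpleGraph V} {u z : V} (h : G.Adj u z)
    (hdom : ∀ a b, G.Adj a b → a = u ∨ b = u ∨ a = z ∨ b = z) :
    IsDIM G {s(u, z)} := by
  refine ⟨?_, ?_, ?_⟩
  · intro e he
    rw [Set.mem_singleton_iff] at he
    subst he
    exact h
  · intro e he f hf hef
    rw [Set.mem_singleton_iff] at he hf
    exact absurd (he.trans hf.symm) hef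
  · intro e he
    induction e with
    | _ a b =>
      rw [SimpleGraph.mem_edgeSet] at he
      refine ⟨s(u, z), rfl, ?_⟩
      rcases hdom a b he with rfl | rfl | rfl | rfl
      · exact ⟨a, Sym2.mem_mk_left a b, Sym2.mem_mk_left a z⟩
      · exact ⟨b, Sym2.mem_mk_right a b, Sym2.mem_mk_left b z⟩
      · exact ⟨a, Sym2.mem_mk_left a b, Sym2.mem_mk_right u a⟩
      · exact ⟨b, Sym2.mem_mk_right a b, Sym2.mem_mk_right u b⟩

/-- A connected cograph has a dominating induced matching iff it is a super-star or
the join of a disjoint union of edges with a stable set. -/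
theorem cograph_dim_characterization {V : Type*} [Fintype V] (G : SimpleGraph V)
    (hconn : G.Connected)
    (hP4 : ¬ ∃ a b c d : V, a ≠ c ∧ a ≠ d ∧ b ≠ d ∧
      G.Adj a b ∧ G.Adj b c ∧ G.Adj c d ∧
      ¬ G.Adj a c ∧ ¬ G.Adj a d ∧ ¬ G.Adj b d) :
    (∃ M, IsDIM G M) ↔ (IsSuperStar G ∨ IsJoinOfMatchingAndStable G) := by
  constructor
  · rintro ⟨M, hsub, hind, hdom⟩
    by_cases h2 : ∃ e ∈ M, ∃ f ∈ M, e ≠ f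
    · -- at least two edges in M : join case
      right
      obtain ⟨e1, he1, e2, he2, hne⟩ := h2
      obtain ⟨⟨x1, y1⟩, he1'⟩ := Quot.exists_rep e1
      obtain ⟨⟨x2, y2⟩, he2'⟩ := Quot.exists_rep e2
      set A : Set V := {v : V | ∃ e ∈ M, v ∈ e} with hA
      have hmemA : ∀ {v : V} {e : Sym2 V}, e ∈ M → v ∈ e → v ∈ A :=
        fun hv he => ⟨_, hv, he⟩
      have hmatch : ∀ a ∈ A, ∃! b, b ∈ A ∧ G.Adj a b := by
        rintro a ⟨e, he, hae⟩
        obtain ⟨b, rfl⟩ := Sym2.mem_iff_exists.1 hae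
        have hadj : G.Adj a b := (SimpleGraph.mem_edgeSet G).1 (hsub he)
        refine ⟨b, ⟨hmemA he (Sym2.mem_mk_right a b), hadj⟩, ?_⟩
        rintro y ⟨⟨f, hf, hyf⟩, hay⟩
        by_cases hfe : f = s(a, b)
        · subst hfe
          rcases Sym2.mem_iff.1 hyf with rfl | rfl
          · exact absurd hay (G.irrefl)
          · rfl
        · exact absurd hay
            (hind s(a, b) he f hf (fun h => hfe h.symm) a (Sym2.mem_mk_left a b) y hyf).2
      have hstable : ∀ p q : V, p ∉ A → q ∉ A → ¬ G.Adj p q := by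
        intro p q hp hq hadj
        obtain ⟨f, hf, u, hu, huf⟩ := hdom s(p, q) ((SimpleGraph.mem_edgeSet G).2 hadj)
        rcases Sym2.mem_iff.1 hu with rfl | rfl
        · exact hp (hmemA hf huf)
        · exact hq (hmemA hf huf)
      have hother : ∀ e ∈ M, ∃ c d : V, s(c, d) ∈ M ∧ s(c, d) ≠ e := by
        intro e he
        by_cases h : e = e1
        · refine ⟨x2, y2, ?_, ?_⟩
          · rw [show s(x2, y2) = e2 from he2']; exact he2
          · rw [show s(x2, y2) = e2 from he2', h]; exact hne.symm
        · refine ⟨x1, y1, ?_, ?_⟩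
          · rw [show s(x1, y1) = e1 from he1']; exact he1
          · rw [show s(x1, y1) = e1 from he1']; exact fun hh => h hh.symm
      -- key sublemma: a vertex outside A adjacent to one endpoint of an M-edge
      -- is adjacent to the other endpoint as well
      have hone : ∀ b, b ∉ A → ∀ x y : V, s(x, y) ∈ M → G.Adj b y → G.Adj b x := by
        intro b hb x y hexy hby
        by_contra hbx
        obtain ⟨c, d, hcd, hcdne⟩ := hother s(x, y) hexy
        have hadjxy : G.Adj x y := (SimpleGraph.mem_edgeSet G).1 (hsub hexy)
        have key := hind s(x, y) hexy s(c, d) hcd (fun h => hcdne h.symm)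
        have hxc := key x (Sym2.mem_mk_left x y) c (Sym2.mem_mk_left c d)
        have hxd := key x (Sym2.mem_mk_left x y) d (Sym2.mem_mk_right c d)
        have hyc := key y (Sym2.mem_mk_right x y) c (Sym2.mem_mk_left c d)
        have hyd := key y (Sym2.mem_mk_right x y) d (Sym2.mem_mk_right c d)
        have hxb : x ≠ b := fun h => hb (h ▸ hmemA hexy (Sym2.mem_mk_left x y))
        have hbc : ¬ G.Adj b c := by
          intro hbc
          exact hP4 ⟨x, y, b, c, hxb, hxc.1, hyc.1,
            hadjxy, hby.symm, hbc, fun h => hbx h.symm, hxc.2, hyc.2⟩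
        have hbd : ¬ G.Adj b d := by
          intro hbd
          exact hP4 ⟨x, y, b, d, hxb, hxd.1, hyd.1,
            hadjxy, hby.symm, hbd, fun h => hbx h.symm, hxd.2, hyd.2⟩
        have hbnec : b ≠ c := fun h => hb (h ▸ hmemA hcd (Sym2.mem_mk_left c d))
        rcases dist2 hconn hP4 b c hbnec with h | ⟨w, hbw, hwc⟩
        · exact hbc h
        · have hwA : w ∈ A := by
            by_contra hwA
            exact hstable b w hb hwA hbw
          obtain ⟨p, hp, hpuniq⟩ := hmatch c (hmemA hcd (Sym2.mem_mk_left c d))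
          have hw : w = p := hpuniq w ⟨hwA, hwc.symm⟩
          have hd : d = p := hpuniq d ⟨hmemA hcd (Sym2.mem_mk_right c d),
            (SimpleGraph.mem_edgeSet G).1 (hsub hcd)⟩
          rw [hw, ← hd] at hbw
          exact hbd hbw
      refine ⟨A, Aᶜ, Set.union_compl_self A, disjoint_compl_right, hmatch,
        fun p hp q hq => hstable p q hp hq, ?_⟩
      rintro a ⟨e, he, hae⟩ b hb
      obtain ⟨y, rfl⟩ := Sym2.mem_iff_exists.1 hae
      by_contra hab
      by_cases hby : G.Adj b y
      · exact hab (hone b hb a y he hby).symm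
      · have hba : b ≠ a := fun h => hb (h ▸ ⟨s(a, y), he, Sym2.mem_mk_left a y⟩)
        rcases dist2 hconn hP4 b a hba with h | ⟨w, hbw, hwa⟩
        · exact hab h.symm
        · have hwA : w ∈ A := by
            by_contra hwA
            exact hstable b w hb hwA hbw
          obtain ⟨p, hp, hpuniq⟩ := hmatch a ⟨s(a, y), he, Sym2.mem_mk_left a y⟩
          have hw : w = p := hpuniq w ⟨hwA, hwa.symm⟩
          have hy : y = p := hpuniq y ⟨⟨s(a, y), he, Sym2.mem_mk_right a y⟩,
            (SimpleGraph.mem_edgeSet G).1 (hsub he)⟩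
          rw [hw, ← hy] at hbw
          exact hby hbw
    · -- at most one edge in M : super-star case
      left
      by_cases hM : ∃ e, e ∈ M
      · obtain ⟨e, he⟩ := hM
        have huniq : ∀ f ∈ M, f = e := by
          intro f hf
          by_contra hfe
          exact h2 ⟨f, hf, e, he, hfe⟩
        obtain ⟨⟨x, y⟩, rfl⟩ := Quot.exists_rep e
        have hadjxy : G.Adj x y := (SimpleGraph.mem_edgeSet G).1 (hsub he)
        have hmeets : ∀ a b : V, G.Adj a b → a = x ∨ a = y ∨ b = x ∨ b = y := by
          intro a b hab
          obtain ⟨f, hf, u, hu, huf⟩ := hdom s(a, b) ((SimpleGraph.mem_edgeSet G).2 hab)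
          rw [huniq f hf] at huf
          rcases Sym2.mem_iff.1 hu with rfl | rfl
          · rcases Sym2.mem_iff.1 huf with rfl | rfl
            · exact Or.inl rfl
            · exact Or.inr (Or.inl rfl)
          · rcases Sym2.mem_iff.1 huf with rfl | rfl
            · exact Or.inr (Or.inr (Or.inl rfl))
            · exact Or.inr (Or.inr (Or.inr rfl))
        by_cases hx : ∀ v, v ≠ x → G.Adj x v
        · refine ⟨x, y, hx, ?_⟩
          intro a b ha hb hab
          rcases hmeets a b hab with h | h | h | h
          · exact absurd h ha
          · exact Or.inl h
          · exact absurd h hb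
          · exact Or.inr h
        · by_cases hy : ∀ v, v ≠ y → G.Adj y v
          · refine ⟨y, x, hy, ?_⟩
            intro a b ha hb hab
            rcases hmeets a b hab with h | h | h | h
            · exact Or.inl h
            · exact absurd h ha
            · exact Or.inr h
            · exact absurd h hb
          · exfalso
            push_neg at hx hy
            obtain ⟨p, hpx, hxp⟩ := hx
            obtain ⟨q, hqy, hyq⟩ := hy
            have hpy : p ≠ y := by rintro rfl; exact hxp hadjxy
            have hqx : q ≠ x := by rintro rfl; exact hyq hadjxy.symm
            have hpadj : G.Adj y p := by
              rcases dist2 hconn hP4 x p (fun h => hpx h.symm) with h | ⟨w, hxw, hwp⟩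
              · exact absurd h hxp
              · rcases hmeets w p hwp with rfl | rfl | h | h
                · exact absurd hwp hxp
                · exact hwp
                · exact absurd h hpx
                · exact absurd h hpy
            have hqadj : G.Adj x q := by
              rcases dist2 hconn hP4 y q (fun h => hqy h.symm) with h | ⟨w, hyw, hwq⟩
              · exact absurd h hyq
              · rcases hmeets w q hwq with rfl | rfl | h | h
                · exact hwq
                · exact absurd hwq hyq
                · exact absurd h hqx
                · exact absurd h hqy
            have hpq : p ≠ q := by
              rintro rfl
              exact hxp hqadj
            have hnpq : ¬ G.Adj p q := by
              intro hadj
              rcases hmeets p q hadj with h | h | h | h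
              · exact hpx h
              · exact hpy h
              · exact hqx h
              · exact hqy h
            have hpx' : p ≠ x := by rintro rfl; exact hnpq hqadj
            exact hP4 ⟨p, y, x, q, hpx', hpq, fun h => hqy h.symm, hpadj.symm, hadjxy.symm,
              hqadj, fun h => hxp h.symm, hnpq, hyq⟩
      · -- M is empty : no edges at all
        have hnoedge : ∀ a b : V, ¬ G.Adj a b := by
          intro a b hab
          obtain ⟨f, hf, _⟩ := hdom s(a, b) ((SimpleGraph.mem_edgeSet G).2 hab)
          exact hM ⟨f, hf⟩
        obtain ⟨u⟩ := hconn.nonempty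
        refine ⟨u, u, ?_, ?_⟩
        · intro v hv
          exfalso
          rcases dist2 hconn hP4 u v (fun h => hv h.symm) with h | ⟨w, hw, _⟩
          · exact hnoedge u v h
          · exact hnoedge u w hw
        · intro a b _ _ hab
          exact absurd hab (hnoedge a b)
  · rintro (⟨u, c, huniv, hc⟩ | ⟨A, B, hunion, hdisj, hmatch, hstable, hjoin⟩)
    · -- super-star case
      by_cases hE : ∃ a b : V, G.Adj a b
      · obtain ⟨p, q, hpq⟩ := hE
        by_cases hcu : c = u
        · have hall : ∀ a b : V, G.Adj a b → a = u ∨ b = u := by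
            intro a b hab
            by_cases ha : a = u
            · exact Or.inl ha
            by_cases hb : b = u
            · exact Or.inr hb
            rcases hc a b ha hb hab with h | h
            · exact Or.inl (h.trans hcu)
            · exact Or.inr (h.trans hcu)
          have hr : ∃ r, G.Adj u r := by
            rcases hall p q hpq with h | h
            · exact ⟨q, h ▸ hpq⟩
            · exact ⟨p, (h ▸ hpq).symm⟩
          obtain ⟨r, hur⟩ := hr
          exact ⟨{s(u, r)}, singleDIM hur (fun a b hab => by
            rcases hall a b hab with h | h
            · exact Or.inl h
            · exact Or.inr (Or.inl h))⟩
        · refine ⟨{s(u, c)}, singleDIM (huniv c hcu) ?_⟩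
          intro a b hab
          by_cases ha : a = u
          · exact Or.inl ha
          by_cases hb : b = u
          · exact Or.inr (Or.inl hb)
          rcases hc a b ha hb hab with h | h
          · exact Or.inr (Or.inr (Or.inl h))
          · exact Or.inr (Or.inr (Or.inr h))
      · refine ⟨∅, ?_, ?_, ?_⟩
        · exact Set.empty_subset _
        · intro e he
          exact absurd he (Set.notMem_empty e)
        · intro e he
          exfalso
          induction e with
          | _ a b =>
            exact hE ⟨a, b, (SimpleGraph.mem_edgeSet G).1 he⟩
    · -- join case
      refine ⟨{e | e ∈ G.edgeSet ∧ ∀ v ∈ e, v ∈ A}, fun e he => he.1, ?_, ?_⟩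
      · intro e he f hf hef u hu v hv
        obtain ⟨u', rfl⟩ := Sym2.mem_iff_exists.1 hu
        obtain ⟨v', rfl⟩ := Sym2.mem_iff_exists.1 hv
        have huu' : G.Adj u u' := (SimpleGraph.mem_edgeSet G).1 he.1
        have hvv' : G.Adj v v' := (SimpleGraph.mem_edgeSet G).1 hf.1
        have huA : u ∈ A := he.2 u (Sym2.mem_mk_left u u')
        have hu'A : u' ∈ A := he.2 u' (Sym2.mem_mk_right u u')
        have hvA : v ∈ A := hf.2 v (Sym2.mem_mk_left v v')
        have hv'A : v' ∈ A := hf.2 v' (Sym2.mem_mk_right v v')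
        constructor
        · rintro rfl
          obtain ⟨b, _, hbuniq⟩ := hmatch u huA
          exact hef (by rw [hbuniq u' ⟨hu'A, huu'⟩, hbuniq v' ⟨hv'A, hvv'⟩])
        · intro hadj
          obtain ⟨b, _, hbuniq⟩ := hmatch u huA
          have h1 : u' = b := hbuniq u' ⟨hu'A, huu'⟩
          have h2 : v = b := hbuniq v ⟨hvA, hadj⟩
          obtain ⟨b', _, hb'uniq⟩ := hmatch v hvA
          have h3 : v' = b' := hb'uniq v' ⟨hv'A, hvv'⟩
          have h4 : u = b' := hb'uniq u ⟨huA, hadj.symm⟩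
          apply hef
          rw [h1, ← h2, h3, ← h4]
          exact Sym2.eq_swap
      · intro e he
        induction e with
        | _ p q =>
          have hpq : G.Adj p q := (SimpleGraph.mem_edgeSet G).1 he
          have hget : ∀ r : V, r ∈ A → ∃ f ∈ {e | e ∈ G.edgeSet ∧ ∀ v ∈ e, v ∈ A}, r ∈ f := by
            intro r hr
            obtain ⟨b, ⟨hbA, hrb⟩, _⟩ := hmatch r hr
            refine ⟨s(r, b), ⟨(SimpleGraph.mem_edgeSet G).2 hrb, ?_⟩, Sym2.mem_mk_left r b⟩
            intro v hv
            rcases Sym2.mem_iff.1 hv with rfl | rfl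
            · exact hr
            · exact hbA
          have hpmem : p ∈ A ∨ p ∈ B := by
            have := Set.mem_univ p
            rw [← hunion] at this
            exact this
          rcases hpmem with hp | hp
          · obtain ⟨f, hf, hrf⟩ := hget p hp
            exact ⟨f, hf, p, Sym2.mem_mk_left p q, hrf⟩
          · have hq : q ∈ A := by
              have hqmem : q ∈ A ∨ q ∈ B := by
                have := Set.mem_univ q
                rw [← hunion] at this
                exact this
              rcases hqmem with hq | hq
              · exact hq
              · exact absurd hpq (hstable p hp q hq)
            obtain ⟨f, hf, hrf⟩ := hget q hq
            exact ⟨f, hf, q, Sym2.mem_mk_right p q, hrf⟩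
end

section
/- Let G be a connected P_7-free graph with a dominating induced matching M and let xy ∈ M lie in an induced P_3. Then N_2(xy), the set of vertices at distance 2 from the edge xy, induces a subgraph that is a disjoint union of edges and isolated vertices, and every edge contained in N_2(xy) belongs to M. -/
/-- `G` contains no chordless path on 7 vertices as an induced subgraph. -/
def P7Free {V : Type*} (G : SimpleGraph V) : Prop :=
  ¬ ∃ p : Fin 7 → V, Function.Injective p ∧
    ∀ i j : Fin 7, G.Adj (p i) (p j) ↔ (i.val + 1 = j.val ∨ j.val + 1 = i.val)

/-- Every vertex at distance exactly 2 from `x` (and at least 2 from `y`) is matched. -/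
lemma aux_matched {V : Type*} (G : SimpleGraph V) (hconn : G.Connected)
    (M : Set (Sym2 V)) (hM : IsDIM G M) (x y : V) (hxy : s(x, y) ∈ M)
    (a : V) (hdx : G.dist a x = 2) (hdy : 2 ≤ G.dist a y) :
    ∃ f ∈ M, a ∈ f := by
  obtain ⟨w, hw⟩ := (hconn a x).exists_walk_length_eq_dist
  rw [hdx] at hw
  set z := w.getVert 1 with hz
  have haz : G.Adj a z := by
    have := w.adj_getVert_succ (i := 0) (by omega)
    simpa [SimpleGraph.Walk.getVert_zero] using this
  have hzx : G.Adj z x := by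
    have := w.adj_getVert_succ (i := 1) (by omega)
    have h2 : w.getVert 2 = x := by
      rw [← hw]; exact w.getVert_length
    rwa [h2] at this
  have hzne_x : z ≠ x := hzx.ne
  have hzne_y : z ≠ y := by
    intro h
    have : G.dist a y ≤ 1 := by
      have := G.dist_le (h ▸ haz).toWalk
      simpa using this
    omega
  -- z is unmatched
  have hzunm : ∀ f ∈ M, z ∉ f := by
    intro f hf hzf
    have hne : f ≠ s(x, y) := by
      intro h; subst h
      rcases Sym2.mem_iff.mp hzf with h | h
      · exact hzne_x h
      · exact hzne_y h
    exact (hM.2.1 f hf s(x, y) hxy hne z hzf x (by simp)).2 hzx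
  -- the edge az is dominated, so a is matched
  obtain ⟨f, hf, u, hu, huf⟩ := hM.2.2 s(a, z) haz
  rcases Sym2.mem_iff.mp hu with h | h
  · exact ⟨f, hf, h ▸ huf⟩
  · exact absurd (h ▸ huf) (hzunm f hf)

/-- In a connected P₇-free graph with a dominating induced matching `M`, if the
edge `xy ∈ M` lies in an induced P₃, then the second distance level of `xy` induces
a disjoint union of edges and isolated vertices, and all its edges belong to `M`. -/
theorem dim_P7free_N2_structure {V : Type*} [Fintype V] (G : SimpleGraph V)
    (hconn : G.Connected) (hP7 : P7Free G) (M : Set (Sym2 V)) (hM : IsDIM G M)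
    (x y r : V) (hxy : s(x, y) ∈ M)
    (hr : (G.Adj r x ∧ ¬ G.Adj r y) ∨ (G.Adj r y ∧ ¬ G.Adj r x)) :
    (∀ a b c : V,
      min (G.dist a x) (G.dist a y) = 2 → min (G.dist b x) (G.dist b y) = 2 →
      min (G.dist c x) (G.dist c y) = 2 →
      G.Adj a b → G.Adj a c → b = c) ∧
    (∀ a b : V,
      min (G.dist a x) (G.dist a y) = 2 → min (G.dist b x) (G.dist b y) = 2 →
      G.Adj a b → s(a, b) ∈ M) := by
  have hyx : s(y, x) ∈ M := by rwa [Sym2.eq_swap]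
  have matched : ∀ a : V, min (G.dist a x) (G.dist a y) = 2 → ∃ f ∈ M, a ∈ f := by
    intro a ha
    have hcases : G.dist a x = 2 ∨ G.dist a y = 2 := by omega
    have hge : 2 ≤ G.dist a x ∧ 2 ≤ G.dist a y := by omega
    rcases hcases with h | h
    · exact aux_matched G hconn M hM x y hxy a h hge.2
    · exact aux_matched G hconn M hM y x hyx a h hge.1
  have edge_mem : ∀ a b : V,
      min (G.dist a x) (G.dist a y) = 2 → min (G.dist b x) (G.dist b y) = 2 →
      G.Adj a b → s(a, b) ∈ M := by
    intro a b ha hb hab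
    obtain ⟨f, hf, haf⟩ := matched a ha
    obtain ⟨g, hg, hbg⟩ := matched b hb
    have hfg : f = g := by
      by_contra hne
      exact (hM.2.1 f hf g hg hne a haf b hbg).2 hab
    subst hfg
    have : f = s(a, b) := (Sym2.mem_and_mem_iff hab.ne).mp ⟨haf, hbg⟩
    exact this ▸ hf
  refine ⟨?_, edge_mem⟩
  intro a b c ha hb hc hab hac
  have h1 := edge_mem a b ha hb hab
  have h2 := edge_mem a c ha hc hac
  by_contra hne
  have hne' : s(a, b) ≠ s(a, c) := fun h => hne (Sym2.congr_right.mp h)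
  exact (hM.2.1 s(a, b) h1 s(a, c) h2 hne' a (by simp) a (by simp)).1 rfl
end

section
/- If M is a dominating induced matching of a P_7-free bipartite graph B and C is a chordless 6-cycle in B, then exactly two edges of C (necessarily an opposite pair) belong to M. -/
private lemma bool3 : ∀ a b c : Bool, a ≠ b → c ≠ b → a = c := by decide

set_option maxHeartbeats 1600000 in
lemma no_alt_aux {V : Type*} (B : SimpleGraph V) (hP7 : P7Free B)
    (c : V → Bool) (hc : ∀ a b, B.Adj a b → c a ≠ c b)
    (M : Set (Sym2 V)) (hMsub : M ⊆ B.edgeSet)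
    (hMind : ∀ e ∈ M, ∀ f ∈ M, e ≠ f → ∀ u ∈ e, ∀ w ∈ f, u ≠ w ∧ ¬ B.Adj u w)
    (v : Fin 6 → V) (hinj : Function.Injective v)
    (hadj : ∀ i j : Fin 6, B.Adj (v i) (v j) ↔ (j = i + 1 ∨ i = j + 1))
    (hnc : ∀ j : Fin 6, s(v j, v (j+1)) ∉ M)
    (f0 : Sym2 V) (hf0 : f0 ∈ M) (h0 : v 0 ∈ f0)
    (f2 : Sym2 V) (hf2 : f2 ∈ M) (h2 : v 2 ∈ f2)
    (f4 : Sym2 V) (hf4 : f4 ∈ M) (h4 : v 4 ∈ f4) : False := by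
  have nAdj : ∀ i j : Fin 6, ¬(j = i + 1 ∨ i = j + 1) → ¬ B.Adj (v i) (v j) :=
    fun i j hn h => hn ((hadj i j).mp h)
  have aAdj : ∀ i j : Fin 6, (j = i + 1 ∨ i = j + 1) → B.Adj (v i) (v j) :=
    fun i j h => (hadj i j).mpr h
  -- partners
  obtain ⟨wA, hwA⟩ := Sym2.mem_iff_exists.mp h2
  obtain ⟨wB, hwB⟩ := Sym2.mem_iff_exists.mp h4
  have aA : B.Adj (v 2) wA := by
    have := hMsub hf2; rw [hwA] at this; exact B.mem_edgeSet.mp this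
  have aB : B.Adj (v 4) wB := by
    have := hMsub hf4; rw [hwB] at this; exact B.mem_edgeSet.mp this
  have mA : wA ∈ f2 := by rw [hwA]; exact Sym2.mem_mk_right _ _
  have mB : wB ∈ f4 := by rw [hwB]; exact Sym2.mem_mk_right _ _
  -- the three matching edges are distinct
  have hf02 : f0 ≠ f2 := by
    intro h; rw [h, hwA] at h0
    rcases Sym2.mem_iff.mp h0 with h' | h'
    · exact absurd (hinj h') (by decide)
    · rw [← h'] at aA; exact nAdj 2 0 (by decide) aA
  have hf24 : f2 ≠ f4 := by
    intro h; rw [← h, hwA] at h4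
    rcases Sym2.mem_iff.mp h4 with h' | h'
    · exact absurd (hinj h') (by decide)
    · rw [← h'] at aA; exact nAdj 2 4 (by decide) aA
  have hf04 : f0 ≠ f4 := by
    intro h; rw [h, hwB] at h0
    rcases Sym2.mem_iff.mp h0 with h' | h'
    · exact absurd (hinj h') (by decide)
    · rw [← h'] at aB; exact nAdj 4 0 (by decide) aB
  -- induced-matching separations
  have iA0 := hMind f2 hf2 f0 hf0 hf02.symm wA mA (v 0) h0
  have iA4 := hMind f2 hf2 f4 hf4 hf24 wA mA (v 4) h4
  have iB0 := hMind f4 hf4 f0 hf0 hf04.symm wB mB (v 0) h0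
  have iB2 := hMind f4 hf4 f2 hf2 hf24.symm wB mB (v 2) h2
  have iAB := hMind f2 hf2 f4 hf4 hf24 wA mA wB mB
  -- colors
  have c01 : c (v 0) ≠ c (v 1) := hc _ _ (aAdj 0 1 (by decide))
  have c12 : c (v 1) ≠ c (v 2) := hc _ _ (aAdj 1 2 (by decide))
  have c23 : c (v 2) ≠ c (v 3) := hc _ _ (aAdj 2 3 (by decide))
  have c34 : c (v 3) ≠ c (v 4) := hc _ _ (aAdj 3 4 (by decide))
  have c45 : c (v 4) ≠ c (v 5) := hc _ _ (aAdj 4 5 (by decide))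
  have c50 : c (v 5) ≠ c (v 0) := hc _ _ (aAdj 5 0 (by decide))
  have cA : c (v 2) ≠ c wA := hc _ _ aA
  have cB : c (v 4) ≠ c wB := hc _ _ aB
  have c02 : c (v 0) = c (v 2) := bool3 _ _ _ c01 c12.symm
  have c24 : c (v 2) = c (v 4) := bool3 _ _ _ c23 c34.symm
  -- wA avoids odd vertices (by bipartiteness)
  have nA1 : ¬ B.Adj wA (v 1) := fun h =>
    (hc _ _ h) (bool3 _ _ _ (Ne.symm cA) c12)
  have nA5 : ¬ B.Adj wA (v 5) := fun h =>
    (hc _ _ h) (bool3 _ _ _ (Ne.symm cA) (c02 ▸ c50))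
  have nB1 : ¬ B.Adj wB (v 1) := fun h =>
    (hc _ _ h) (bool3 _ _ _ (Ne.symm cB) (c24 ▸ c12))
  have nB5 : ¬ B.Adj wB (v 5) := fun h =>
    (hc _ _ h) (bool3 _ _ _ (Ne.symm cB) c45.symm)
  -- wA, wB distinct from cycle vertices
  have eA2 : wA ≠ v 2 := fun h => B.irrefl (h ▸ aA)
  have eB4 : wB ≠ v 4 := fun h => B.irrefl (h ▸ aB)
  have eA1 : wA ≠ v 1 := by
    intro h
    apply hnc 1
    have e : (1 + 1 : Fin 6) = 2 := by decide
    rw [e, Sym2.eq_swap, ← h, ← hwA]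
    exact hf2
  have eA5 : wA ≠ v 5 := fun h => nAdj 2 5 (by decide) (h ▸ aA)
  have eB5 : wB ≠ v 5 := by
    intro h
    apply hnc 4
    have e : (4 + 1 : Fin 6) = 5 := by decide
    rw [e, ← h, ← hwB]
    exact hf4
  have eB1 : wB ≠ v 1 := fun h => nAdj 4 1 (by decide) (h ▸ aB)
  -- cycle non-adjacencies
  have n20 : ¬ B.Adj (v 2) (v 0) := nAdj 2 0 (by decide)
  have n25 : ¬ B.Adj (v 2) (v 5) := nAdj 2 5 (by decide)
  have n24 : ¬ B.Adj (v 2) (v 4) := nAdj 2 4 (by decide)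
  have n15 : ¬ B.Adj (v 1) (v 5) := nAdj 1 5 (by decide)
  have n14 : ¬ B.Adj (v 1) (v 4) := nAdj 1 4 (by decide)
  have n04 : ¬ B.Adj (v 0) (v 4) := nAdj 0 4 (by decide)
  -- cycle adjacencies
  have a21 : B.Adj (v 2) (v 1) := aAdj 2 1 (by decide)
  have a10 : B.Adj (v 1) (v 0) := aAdj 1 0 (by decide)
  have a05 : B.Adj (v 0) (v 5) := aAdj 0 5 (by decide)
  have a54 : B.Adj (v 5) (v 4) := aAdj 5 4 (by decide)
  -- cycle vertex distinctness
  have hv : ∀ i j : Fin 6, i ≠ j → v i ≠ v j := fun i j h => hinj.ne h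
  have d21 : v 2 ≠ v 1 := hv 2 1 (by decide)
  have d20 : v 2 ≠ v 0 := hv 2 0 (by decide)
  have d25 : v 2 ≠ v 5 := hv 2 5 (by decide)
  have d24 : v 2 ≠ v 4 := hv 2 4 (by decide)
  have d10 : v 1 ≠ v 0 := hv 1 0 (by decide)
  have d15 : v 1 ≠ v 5 := hv 1 5 (by decide)
  have d14 : v 1 ≠ v 4 := hv 1 4 (by decide)
  have d05 : v 0 ≠ v 5 := hv 0 5 (by decide)
  have d04 : v 0 ≠ v 4 := hv 0 4 (by decide)
  have d54 : v 5 ≠ v 4 := hv 5 4 (by decide)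
  have hirr : ∀ x : V, ¬ B.Adj x x := fun x => B.irrefl
  obtain ⟨eA0, nA0⟩ := iA0
  obtain ⟨eA4, nA4⟩ := iA4
  obtain ⟨eB0, nB0⟩ := iB0
  obtain ⟨eB2, nB2⟩ := iB2
  obtain ⟨eAB, nAB⟩ := iAB
  -- symmetric variants
  have a12 := a21.symm; have a01 := a10.symm; have a50 := a05.symm; have a45 := a54.symm
  have aA' := aA.symm; have aB' := aB.symm
  have ns : ∀ x y : V, ¬ B.Adj x y → ¬ B.Adj y x := fun _ _ h h' => h h'.symm
  have n02 := ns _ _ n20; have n52 := ns _ _ n25; have n42 := ns _ _ n24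
  have n51 := ns _ _ n15; have n41 := ns _ _ n14; have n40 := ns _ _ n04
  have nA1' := ns _ _ nA1; have nA5' := ns _ _ nA5; have nB1' := ns _ _ nB1; have nB5' := ns _ _ nB5
  have nA0' := ns _ _ nA0; have nA4' := ns _ _ nA4; have nB0' := ns _ _ nB0; have nB2' := ns _ _ nB2
  have nAB' := ns _ _ nAB
  have d12 := d21.symm; have d02 := d20.symm; have d52 := d25.symm; have d42 := d24.symm
  have d01 := d10.symm; have d51 := d15.symm; have d41 := d14.symm
  have d50 := d05.symm; have d40 := d04.symm; have d45 := d54.symm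
  have eA1' := eA1.symm; have eA5' := eA5.symm; have eA2' := eA2.symm
  have eB1' := eB1.symm; have eB5' := eB5.symm; have eB4' := eB4.symm
  have eA0' := eA0.symm; have eA4' := eA4.symm; have eB0' := eB0.symm; have eB2' := eB2.symm
  have eAB' := eAB.symm
  have iwA : ¬ B.Adj wA wA := B.irrefl
  have iwB : ¬ B.Adj wB wB := B.irrefl
  have iv0 : ¬ B.Adj (v 0) (v 0) := B.irrefl
  have iv1 : ¬ B.Adj (v 1) (v 1) := B.irrefl
  have iv2 : ¬ B.Adj (v 2) (v 2) := B.irrefl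
  have iv4 : ¬ B.Adj (v 4) (v 4) := B.irrefl
  have iv5 : ¬ B.Adj (v 5) (v 5) := B.irrefl
  apply hP7
  clear hc hadj nAdj aAdj hv ns hirr hMind hMsub hnc hP7 hinj
  clear hwA hwB mA mB hf02 hf24 hf04 hf0 hf2 hf4 h0 h2 h4
  clear c01 c12 c23 c34 c45 c50 cA cB c02 c24
  have p5 : (![wA, v 2, v 1, v 0, v 5, v 4, wB] : Fin 7 → V) 5 = v 4 := rfl
  have p6 : (![wA, v 2, v 1, v 0, v 5, v 4, wB] : Fin 7 → V) 6 = wB := rfl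
  refine ⟨![wA, v 2, v 1, v 0, v 5, v 4, wB], ?_, ?_⟩
  · intro a b hab
    fin_cases a <;> fin_cases b <;> simp_all [p5, p6]
  · intro i j
    fin_cases i <;> fin_cases j <;> simp_all [p5, p6]

private lemma fin6_n2a : ∀ i : Fin 6, i + 2 ≠ i := by decide
private lemma fin6_n2b : ∀ i : Fin 6, i + 2 ≠ i + 1 := by decide
private lemma fin6_n5a : ∀ i : Fin 6, i + 5 ≠ i := by decide
private lemma fin6_n5b : ∀ i : Fin 6, i + 5 ≠ i + 1 := by decide
private lemma fin6_ne_add_one : ∀ i : Fin 6, i ≠ i + 1 := by decide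
private lemma fin6_e12 : ∀ i : Fin 6, i + 1 + 1 = i + 2 := by decide
private lemma fin6_e23 : ∀ i : Fin 6, i + 2 + 1 = i + 3 := by decide
private lemma fin6_e34 : ∀ i : Fin 6, i + 3 + 1 = i + 4 := by decide
private lemma fin6_e45 : ∀ i : Fin 6, i + 4 + 1 = i + 5 := by decide
private lemma fin6_e50 : ∀ i : Fin 6, i + 5 + 1 = i := by decide
private lemma fin6_key : ∀ i j : Fin 6, j ≠ i + 2 → j ≠ i + 5 → j + 1 ≠ i + 2 → j + 1 ≠ i + 5 →
    j = i ∨ j = i + 3 := by decide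

/-- In a P₇-free bipartite graph with a dominating induced matching `M`, every
chordless C₆ contains exactly two edges of `M`, which form an opposite pair. -/
theorem dim_P7free_bipartite_C6 {V : Type*} [Fintype V] (B : SimpleGraph V)
    (hP7 : P7Free B) (hbip : ∃ f : V → Bool, ∀ a b, B.Adj a b → f a ≠ f b)
    (M : Set (Sym2 V)) (hM : IsDIM B M) (v : Fin 6 → V)
    (hinj : Function.Injective v)
    (hadj : ∀ i j : Fin 6, B.Adj (v i) (v j) ↔ (j = i + 1 ∨ i = j + 1)) :
    ∃ i : Fin 6, s(v i, v (i + 1)) ∈ M ∧ s(v (i + 3), v (i + 4)) ∈ M ∧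
      ∀ j : Fin 6, s(v j, v (j + 1)) ∈ M → (j = i ∨ j = i + 3) := by
  obtain ⟨hMsub, hMind, hMdom⟩ := hM
  obtain ⟨c, hc⟩ := hbip
  have hcyc : ∀ i : Fin 6, B.Adj (v i) (v (i + 1)) := fun i => (hadj i (i + 1)).mpr (Or.inl rfl)
  -- each cycle edge is dominated
  have hA : ∀ i : Fin 6, (∃ f ∈ M, v i ∈ f) ∨ (∃ f ∈ M, v (i + 1) ∈ f) := by
    intro i
    obtain ⟨f, hf, u, hu, huf⟩ := hMdom _ (B.mem_edgeSet.mpr (hcyc i))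
    rcases Sym2.mem_iff.mp hu with h | h
    · exact Or.inl ⟨f, hf, h ▸ huf⟩
    · exact Or.inr ⟨f, hf, h ▸ huf⟩
  -- two adjacent matched vertices force the edge between them into M
  have hB : ∀ i : Fin 6, (∃ f ∈ M, v i ∈ f) → (∃ f ∈ M, v (i + 1) ∈ f) →
      s(v i, v (i + 1)) ∈ M := by
    rintro i ⟨f, hf, hvf⟩ ⟨g, hg, hvg⟩
    by_cases hfg : f = g
    · subst hfg
      have hne : v i ≠ v (i + 1) := hinj.ne (fin6_ne_add_one i)
      exact ((Sym2.mem_and_mem_iff hne).mp ⟨hvf, hvg⟩) ▸ hf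
    · exact absurd (hcyc i) ((hMind f hf g hg hfg _ hvf _ hvg).2)
  have hboth : ∀ j : Fin 6, s(v j, v (j + 1)) ∈ M →
      (∃ f ∈ M, v j ∈ f) ∧ (∃ f ∈ M, v (j + 1) ∈ f) :=
    fun j hj => ⟨⟨_, hj, Sym2.mem_mk_left _ _⟩, ⟨_, hj, Sym2.mem_mk_right _ _⟩⟩
  -- a cycle edge in M blocks matching of the next vertex
  have hC : ∀ i : Fin 6, s(v i, v (i + 1)) ∈ M → ¬ ∃ f ∈ M, v (i + 2) ∈ f := by
    rintro i hi ⟨g, hg, hvg⟩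
    have hne : s(v i, v (i + 1)) ≠ g := by
      intro h
      rw [← h] at hvg
      rcases Sym2.mem_iff.mp hvg with h' | h'
      · exact fin6_n2a i (hinj h')
      · exact fin6_n2b i (hinj h')
    have := (hMind _ hi g hg hne (v (i + 1)) (Sym2.mem_mk_right _ _) (v (i + 2)) hvg).2
    exact this (fin6_e12 i ▸ hcyc (i + 1))
  -- ... and of the previous vertex
  have hC' : ∀ i : Fin 6, s(v i, v (i + 1)) ∈ M → ¬ ∃ f ∈ M, v (i + 5) ∈ f := by
    rintro i hi ⟨g, hg, hvg⟩
    have hne : s(v i, v (i + 1)) ≠ g := by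
      intro h
      rw [← h] at hvg
      rcases Sym2.mem_iff.mp hvg with h' | h'
      · exact fin6_n5a i (hinj h')
      · exact fin6_n5b i (hinj h')
    have := (hMind _ hi g hg hne (v i) (Sym2.mem_mk_left _ _) (v (i + 5)) hvg).2
    exact this ((fin6_e50 i ▸ hcyc (i + 5)).symm)
  by_cases hex : ∃ i : Fin 6, s(v i, v (i + 1)) ∈ M
  · obtain ⟨i, hi⟩ := hex
    refine ⟨i, hi, ?_, ?_⟩
    · have m3 := (hA (i + 2)).resolve_left (hC i hi)
      rw [fin6_e23 i] at m3
      have m4 := hA (i + 4)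
      rw [fin6_e45 i] at m4
      have m4 := m4.resolve_right (hC' i hi)
      rw [← fin6_e34 i] at m4
      have := hB (i + 3) m3 m4
      rwa [fin6_e34 i] at this
    · intro j hj
      obtain ⟨mj, mj1⟩ := hboth j hj
      exact fin6_key i j (fun h => hC i hi (h ▸ mj)) (fun h => hC' i hi (h ▸ mj))
        (fun h => hC i hi (h ▸ mj1)) (fun h => hC' i hi (h ▸ mj1))
  · exfalso
    push_neg at hex
    have step : ∀ i : Fin 6, (∃ f ∈ M, v i ∈ f) → (∃ f ∈ M, v (i + 2) ∈ f) := by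
      intro i hi
      have h1 : ¬ ∃ f ∈ M, v (i + 1) ∈ f := fun h' => hex i (hB i hi h')
      have := (hA (i + 1)).resolve_left h1
      rwa [fin6_e12 i] at this
    rcases hA 0 with h0 | h1
    · have m2 := step 0 h0
      have e02 : (0 + 2 : Fin 6) = 2 := by decide
      rw [e02] at m2
      have m4 := step 2 m2
      have e24 : (2 + 2 : Fin 6) = 4 := by decide
      rw [e24] at m4
      obtain ⟨f0, hf0, hv0⟩ := h0
      obtain ⟨f2, hf2, hv2⟩ := m2
      obtain ⟨f4, hf4, hv4⟩ := m4
      exact no_alt_aux B hP7 c hc M hMsub hMind v hinj hadj hex f0 hf0 hv0 f2 hf2 hv2 f4 hf4 hv4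
    · -- shift the cycle by one
      set v' : Fin 6 → V := fun i => v (i + 1) with hv'
      have hinj' : Function.Injective v' := fun a b h => by
        have := hinj h
        exact add_right_cancel this
      have equiv : ∀ i j : Fin 6, (j + 1 = i + 1 + 1 ∨ i + 1 = j + 1 + 1) ↔
          (j = i + 1 ∨ i = j + 1) := by decide
      have hadj' : ∀ i j : Fin 6, B.Adj (v' i) (v' j) ↔ (j = i + 1 ∨ i = j + 1) :=
        fun i j => (hadj (i + 1) (j + 1)).trans (equiv i j)
      have hex' : ∀ j : Fin 6, s(v' j, v' (j + 1)) ∉ M := fun j => hex (j + 1)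
      have m3 := step (0 + 1) h1
      have e13 : (0 + 1 + 2 : Fin 6) = 2 + 1 := by decide
      rw [e13] at m3
      have m5 := step (2 + 1) m3
      have e35 : (2 + 1 + 2 : Fin 6) = 4 + 1 := by decide
      rw [e35] at m5
      obtain ⟨f0, hf0, hv0⟩ := h1
      obtain ⟨f2, hf2, hv2⟩ := m3
      obtain ⟨f4, hf4, hv4⟩ := m5
      exact no_alt_aux B hP7 c hc M hMsub hMind v' hinj' hadj' hex' f0 hf0 hv0 f2 hf2 hv2 f4 hf4 hv4
end

section
/- If a P_7-free bipartite graph B has a dominating induced matching, then B contains no induced domino, where the domino is the bipartite graph on vertices x_1,x_2,x_3,y_1,y_2,y_3 with (x_1,y_1,x_2,y_2,x_3) an induced P_5 and y_3 adjacent to x_1, x_2, x_3. -/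
lemma mkP7 {V : Type*} (G : SimpleGraph V) {a b c d e g h : V}
    (hab : G.Adj a b) (hbc : G.Adj b c) (hcd : G.Adj c d) (hde : G.Adj d e)
    (heg : G.Adj e g) (hgh : G.Adj g h)
    (nac : ¬G.Adj a c) (nad : ¬G.Adj a d) (nae : ¬G.Adj a e) (nag : ¬G.Adj a g)
    (nah : ¬G.Adj a h) (nbd : ¬G.Adj b d) (nbe : ¬G.Adj b e) (nbg : ¬G.Adj b g)
    (nbh : ¬G.Adj b h) (nce : ¬G.Adj c e) (ncg : ¬G.Adj c g) (nch : ¬G.Adj c h)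
    (ndg : ¬G.Adj d g) (ndh : ¬G.Adj d h) (neh : ¬G.Adj e h)
    (dac : a ≠ c) (dad : a ≠ d) (dae : a ≠ e) (dag : a ≠ g) (dah : a ≠ h)
    (dbd : b ≠ d) (dbe : b ≠ e) (dbg : b ≠ g) (dbh : b ≠ h)
    (dce : c ≠ e) (dcg : c ≠ g) (dch : c ≠ h)
    (ddg : d ≠ g) (ddh : d ≠ h) (deh : e ≠ h) :
    ∃ p : Fin 7 → V, Function.Injective p ∧
      ∀ i j : Fin 7, G.Adj (p i) (p j) ↔ (i.val + 1 = j.val ∨ j.val + 1 = i.val) := by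
  refine ⟨![a, b, c, d, e, g, h], ?_, ?_⟩
  · intro i j hij
    fin_cases i <;> fin_cases j
    · exact rfl
    · exact absurd hij hab.ne
    · exact absurd hij dac
    · exact absurd hij dad
    · exact absurd hij dae
    · exact absurd hij dag
    · exact absurd hij dah
    · exact absurd hij hab.ne'
    · exact rfl
    · exact absurd hij hbc.ne
    · exact absurd hij dbd
    · exact absurd hij dbe
    · exact absurd hij dbg
    · exact absurd hij dbh
    · exact absurd hij (Ne.symm dac)
    · exact absurd hij hbc.ne'
    · exact rfl
    · exact absurd hij hcd.ne
    · exact absurd hij dce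
    · exact absurd hij dcg
    · exact absurd hij dch
    · exact absurd hij (Ne.symm dad)
    · exact absurd hij (Ne.symm dbd)
    · exact absurd hij hcd.ne'
    · exact rfl
    · exact absurd hij hde.ne
    · exact absurd hij ddg
    · exact absurd hij ddh
    · exact absurd hij (Ne.symm dae)
    · exact absurd hij (Ne.symm dbe)
    · exact absurd hij (Ne.symm dce)
    · exact absurd hij hde.ne'
    · exact rfl
    · exact absurd hij heg.ne
    · exact absurd hij deh
    · exact absurd hij (Ne.symm dag)
    · exact absurd hij (Ne.symm dbg)
    · exact absurd hij (Ne.symm dcg)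
    · exact absurd hij (Ne.symm ddg)
    · exact absurd hij heg.ne'
    · exact rfl
    · exact absurd hij hgh.ne
    · exact absurd hij (Ne.symm dah)
    · exact absurd hij (Ne.symm dbh)
    · exact absurd hij (Ne.symm dch)
    · exact absurd hij (Ne.symm ddh)
    · exact absurd hij (Ne.symm deh)
    · exact absurd hij hgh.ne'
    · exact rfl
  · intro i j
    fin_cases i <;> fin_cases j
    · exact iff_of_false (G.irrefl) (by decide)
    · exact iff_of_true hab (by decide)
    · exact iff_of_false nac (by decide)
    · exact iff_of_false nad (by decide)
    · exact iff_of_false nae (by decide)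
    · exact iff_of_false nag (by decide)
    · exact iff_of_false nah (by decide)
    · exact iff_of_true hab.symm (by decide)
    · exact iff_of_false (G.irrefl) (by decide)
    · exact iff_of_true hbc (by decide)
    · exact iff_of_false nbd (by decide)
    · exact iff_of_false nbe (by decide)
    · exact iff_of_false nbg (by decide)
    · exact iff_of_false nbh (by decide)
    · exact iff_of_false (fun h' => nac h'.symm) (by decide)
    · exact iff_of_true hbc.symm (by decide)
    · exact iff_of_false (G.irrefl) (by decide)
    · exact iff_of_true hcd (by decide)
    · exact iff_of_false nce (by decide)
    · exact iff_of_false ncg (by decide)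
    · exact iff_of_false nch (by decide)
    · exact iff_of_false (fun h' => nad h'.symm) (by decide)
    · exact iff_of_false (fun h' => nbd h'.symm) (by decide)
    · exact iff_of_true hcd.symm (by decide)
    · exact iff_of_false (G.irrefl) (by decide)
    · exact iff_of_true hde (by decide)
    · exact iff_of_false ndg (by decide)
    · exact iff_of_false ndh (by decide)
    · exact iff_of_false (fun h' => nae h'.symm) (by decide)
    · exact iff_of_false (fun h' => nbe h'.symm) (by decide)
    · exact iff_of_false (fun h' => nce h'.symm) (by decide)
    · exact iff_of_true hde.symm (by decide)
    · exact iff_of_false (G.irrefl) (by decide)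
    · exact iff_of_true heg (by decide)
    · exact iff_of_false neh (by decide)
    · exact iff_of_false (fun h' => nag h'.symm) (by decide)
    · exact iff_of_false (fun h' => nbg h'.symm) (by decide)
    · exact iff_of_false (fun h' => ncg h'.symm) (by decide)
    · exact iff_of_false (fun h' => ndg h'.symm) (by decide)
    · exact iff_of_true heg.symm (by decide)
    · exact iff_of_false (G.irrefl) (by decide)
    · exact iff_of_true hgh (by decide)
    · exact iff_of_false (fun h' => nah h'.symm) (by decide)
    · exact iff_of_false (fun h' => nbh h'.symm) (by decide)
    · exact iff_of_false (fun h' => nch h'.symm) (by decide)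
    · exact iff_of_false (fun h' => ndh h'.symm) (by decide)
    · exact iff_of_false (fun h' => neh h'.symm) (by decide)
    · exact iff_of_true hgh.symm (by decide)
    · exact iff_of_false (G.irrefl) (by decide)


/-- A P₇-free bipartite graph with a dominating induced matching contains no
induced domino. -/
theorem dim_P7free_bipartite_domino_free {V : Type*} [Fintype V] (B : SimpleGraph V)
    (hP7 : P7Free B) (hbip : ∃ f : V → Bool, ∀ a b, B.Adj a b → f a ≠ f b)
    (h : ∃ M, IsDIM B M) :
    ¬ ∃ x₁ x₂ x₃ y₁ y₂ y₃ : V,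
      [x₁, x₂, x₃, y₁, y₂, y₃].Pairwise (· ≠ ·) ∧
      B.Adj x₁ y₁ ∧ B.Adj x₂ y₁ ∧ B.Adj x₂ y₂ ∧ B.Adj x₃ y₂ ∧
      B.Adj x₁ y₃ ∧ B.Adj x₂ y₃ ∧ B.Adj x₃ y₃ ∧
      ¬ B.Adj x₁ y₂ ∧ ¬ B.Adj x₃ y₁ ∧
      ¬ B.Adj x₁ x₂ ∧ ¬ B.Adj x₁ x₃ ∧ ¬ B.Adj x₂ x₃ ∧
      ¬ B.Adj y₁ y₂ ∧ ¬ B.Adj y₁ y₃ ∧ ¬ B.Adj y₂ y₃ := by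
  rintro ⟨x1, x2, x3, y1, y2, y3, hne, a11, a21, a22, a32, a13, a23, a33,
    n12, n31, nx12, nx13, nx23, ny12, ny13, ny23⟩
  obtain ⟨M, hsub, hind, hdom⟩ := h
  obtain ⟨f, hf⟩ := hbip
  simp [List.pairwise_cons] at hne
  obtain ⟨⟨d12, d13, dA1, dB1, dC1⟩, ⟨d23, dA2, dB2, dC2⟩, ⟨dA3, dB3, dC3⟩,
    ⟨dAB, dAC⟩, dBC⟩ := hne
  -- basic color facts
  have sameSide : ∀ u v w, B.Adj u w → B.Adj v w → f u = f v := by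
    intro u v w hu hv
    have h1 := hf _ _ hu
    have h2 := hf _ _ hv
    cases hu' : f u <;> cases hv' : f v <;> cases hw' : f w <;> simp_all
  have nadj_same : ∀ u v, f u = f v → ¬ B.Adj u v := fun u v hc hA => hf _ _ hA hc
  have hxy : f x2 ≠ f y3 := hf x2 y3 a23
  have necol : ∀ u v, f u = f x2 → f v = f y3 → u ≠ v := by
    intro u v hu hv h'
    exact hxy (by rw [← hu, h', hv])
  have c1 : f x1 = f x2 := sameSide x1 x2 y3 a13 a23
  have c3 : f x3 = f x2 := sameSide x3 x2 y3 a33 a23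
  have cy1 : f y1 = f y3 := sameSide y1 y3 x2 a21.symm a23.symm
  have cy2 : f y2 = f y3 := sameSide y2 y3 x2 a22.symm a23.symm
  -- matching machinery
  have huniq : ∀ e1 ∈ M, ∀ e2 ∈ M, ∀ v : V, v ∈ e1 → v ∈ e2 → e1 = e2 := by
    intro e1 h1 e2 h2 v hv1 hv2
    by_contra hne'
    exact (hind e1 h1 e2 h2 hne' v hv1 v hv2).1 rfl
  have hadj_eq : ∀ e1 ∈ M, ∀ e2 ∈ M, ∀ u v : V, u ∈ e1 → v ∈ e2 → B.Adj u v → e1 = e2 := by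
    intro e1 h1 e2 h2 u v hu hv hA
    by_contra hne'
    exact (hind e1 h1 e2 h2 hne' u hu v hv).2 hA
  have hdom' : ∀ u v, B.Adj u v → (∃ e ∈ M, u ∈ e) ∨ (∃ e ∈ M, v ∈ e) := by
    intro u v hA
    obtain ⟨e, heM, w, hw1, hw2⟩ := hdom s(u, v) (B.mem_edgeSet.mpr hA)
    rcases Sym2.mem_iff.mp hw1 with rfl | rfl
    · exact Or.inl ⟨e, heM, hw2⟩
    · exact Or.inr ⟨e, heM, hw2⟩
  by_cases hx2 : ∃ e ∈ M, x2 ∈ e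
  · -- Case A : x2 covered, with mate m
    obtain ⟨e, heM, hx2e⟩ := hx2
    obtain ⟨m, rfl⟩ := Sym2.mem_iff_exists.mp hx2e
    have hAm : B.Adj x2 m := B.mem_edgeSet.mp (hsub heM)
    have cm : f m = f y3 := sameSide m y3 x2 hAm.symm a23.symm
    have hYm : ∀ z, B.Adj x2 z → ∀ e' ∈ M, z ∈ e' → z = m := by
      intro z hz e' he' hze
      have hee := hadj_eq _ heM _ he' x2 z (Sym2.mem_mk_left x2 m) hze hz
      rw [← hee] at hze
      rcases Sym2.mem_iff.mp hze with rfl | rfl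
      · exact absurd hz (B.irrefl)
      · rfl
    have hx1 : ∃ e' ∈ M, x1 ∈ e' := by
      by_cases hy1 : ∃ e' ∈ M, y1 ∈ e'
      · obtain ⟨f1, hf1, hy1f⟩ := hy1
        have hy1m : y1 = m := hYm y1 a21 f1 hf1 hy1f
        rcases hdom' x1 y3 a13 with h' | h'
        · exact h'
        · obtain ⟨f3, hf3, hy3f⟩ := h'
          have hy3m : y3 = m := hYm y3 a23 f3 hf3 hy3f
          exact absurd (hy1m.trans hy3m.symm) dAC
      · rcases hdom' x1 y1 a11 with h' | h'
        · exact h'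
        · exact absurd h' hy1
    have hx3 : ∃ e' ∈ M, x3 ∈ e' := by
      by_cases hy2 : ∃ e' ∈ M, y2 ∈ e'
      · obtain ⟨f2, hf2, hy2f⟩ := hy2
        have hy2m : y2 = m := hYm y2 a22 f2 hf2 hy2f
        rcases hdom' x3 y3 a33 with h' | h'
        · exact h'
        · obtain ⟨f3, hf3, hy3f⟩ := h'
          have hy3m : y3 = m := hYm y3 a23 f3 hf3 hy3f
          exact absurd (hy2m.trans hy3m.symm) dBC
      · rcases hdom' x3 y2 a32 with h' | h'
        · exact h'
        · exact absurd h' hy2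
    obtain ⟨e1, he1M, hx1e1⟩ := hx1
    obtain ⟨m1, rfl⟩ := Sym2.mem_iff_exists.mp hx1e1
    obtain ⟨e3, he3M, hx3e3⟩ := hx3
    obtain ⟨m3, rfl⟩ := Sym2.mem_iff_exists.mp hx3e3
    have hA1 : B.Adj x1 m1 := B.mem_edgeSet.mp (hsub he1M)
    have hA3 : B.Adj x3 m3 := B.mem_edgeSet.mp (hsub he3M)
    have cm1 : f m1 = f y3 := sameSide m1 y3 x1 hA1.symm a13.symm
    have cm3 : f m3 = f y3 := sameSide m3 y3 x3 hA3.symm a33.symm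
    have hee1 : s(x1, m1) ≠ s(x2, m) := by
      intro h'
      have : x1 ∈ s(x2, m) := by rw [← h']; exact Sym2.mem_mk_left x1 m1
      rcases Sym2.mem_iff.mp this with h'' | h''
      · exact d12 h''
      · exact necol x1 m c1 cm h''
    have hee3 : s(x3, m3) ≠ s(x2, m) := by
      intro h'
      have : x3 ∈ s(x2, m) := by rw [← h']; exact Sym2.mem_mk_left x3 m3
      rcases Sym2.mem_iff.mp this with h'' | h''
      · exact d23 h''.symm
      · exact necol x3 m c3 cm h''
    have hee13 : s(x1, m1) ≠ s(x3, m3) := by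
      intro h'
      have : x1 ∈ s(x3, m3) := by rw [← h']; exact Sym2.mem_mk_left x1 m1
      rcases Sym2.mem_iff.mp this with h'' | h''
      · exact d13 h''
      · exact necol x1 m3 c1 cm3 h''
    have mateNe : ∀ (x' m' : V), s(x', m') ∈ M → s(x', m') ≠ s(x2, m) →
        ∀ z, B.Adj x2 z → m' ≠ z := by
      intro x' m' hM' hne' z hz h'
      subst h'
      have hzc := hYm m' hz _ hM' (Sym2.mem_mk_right x' m')
      apply hne'
      exact huniq _ hM' _ heM m (by rw [← hzc]; exact Sym2.mem_mk_right x' m')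
        (Sym2.mem_mk_right x2 m)
    have dah : m1 ≠ m3 := by
      intro h'
      apply hee13
      exact huniq _ he1M _ he3M m1 (Sym2.mem_mk_right x1 m1)
        (by rw [h']; exact Sym2.mem_mk_right x3 m3)
    exact hP7 (mkP7 B (a := m1) (b := x1) (c := y1) (d := x2) (e := y2) (g := x3) (h := m3)
      hA1.symm a11 a21.symm a22 a32.symm hA3
      (nadj_same m1 y1 (cm1.trans cy1.symm))
      ((hind _ he1M _ heM hee1 m1 (Sym2.mem_mk_right x1 m1) x2 (Sym2.mem_mk_left x2 m)).2)
      (nadj_same m1 y2 (cm1.trans cy2.symm))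
      ((hind _ he1M _ he3M hee13 m1 (Sym2.mem_mk_right x1 m1) x3 (Sym2.mem_mk_left x3 m3)).2)
      (nadj_same m1 m3 (cm1.trans cm3.symm))
      nx12 n12 nx13
      ((hind _ he1M _ he3M hee13 x1 (Sym2.mem_mk_left x1 m1) m3 (Sym2.mem_mk_right x3 m3)).2)
      ny12 (fun h' => n31 h'.symm)
      (nadj_same y1 m3 (cy1.trans cm3.symm))
      nx23
      ((hind _ heM _ he3M (Ne.symm hee3) x2 (Sym2.mem_mk_left x2 m) m3 (Sym2.mem_mk_right x3 m3)).2)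
      (nadj_same y2 m3 (cy2.trans cm3.symm))
      (mateNe x1 m1 he1M hee1 y1 a21)
      ((necol x2 m1 rfl cm1).symm)
      (mateNe x1 m1 he1M hee1 y2 a22)
      ((necol x3 m1 c3 cm1).symm)
      dah
      d12 dB1 d13 (necol x1 m3 c1 cm3)
      dAB (fun h' => dA3 h'.symm) ((mateNe x3 m3 he3M hee3 y1 a21).symm)
      d23 (necol x2 m3 rfl cm3)
      ((mateNe x3 m3 he3M hee3 y2 a22).symm))
  · -- Case B : x2 uncovered; y1, y2, y3 all covered
    have hy1 := (hdom' x2 y1 a21).resolve_left hx2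
    have hy2 := (hdom' x2 y2 a22).resolve_left hx2
    have hy3 := (hdom' x2 y3 a23).resolve_left hx2
    obtain ⟨f1, hf1M, hy1f⟩ := hy1
    obtain ⟨n1, rfl⟩ := Sym2.mem_iff_exists.mp hy1f
    obtain ⟨f2, hf2M, hy2f⟩ := hy2
    obtain ⟨n2, rfl⟩ := Sym2.mem_iff_exists.mp hy2f
    obtain ⟨f3, hf3M, hy3f⟩ := hy3
    obtain ⟨n3, rfl⟩ := Sym2.mem_iff_exists.mp hy3f
    have hB1 : B.Adj y1 n1 := B.mem_edgeSet.mp (hsub hf1M)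
    have hB2 : B.Adj y2 n2 := B.mem_edgeSet.mp (hsub hf2M)
    have hB3 : B.Adj y3 n3 := B.mem_edgeSet.mp (hsub hf3M)
    have cn1 : f n1 = f x2 := sameSide n1 x2 y1 hB1.symm a21
    have cn2 : f n2 = f x2 := sameSide n2 x2 y2 hB2.symm a22
    have cn3 : f n3 = f x2 := sameSide n3 x2 y3 hB3.symm a23
    have hx1 : ¬ ∃ e' ∈ M, x1 ∈ e' := by
      rintro ⟨e', he'M, hx1e⟩
      have h1 := hadj_eq _ he'M _ hf1M x1 y1 hx1e (Sym2.mem_mk_left y1 n1) a11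
      have h3 := hadj_eq _ he'M _ hf3M x1 y3 hx1e (Sym2.mem_mk_left y3 n3) a13
      have hy3mem : y3 ∈ s(y1, n1) := by
        rw [← h1, h3]; exact Sym2.mem_mk_left y3 n3
      rcases Sym2.mem_iff.mp hy3mem with h' | h'
      · exact dAC h'.symm
      · exact ny13 (by rw [h']; exact hB1)
    have hx3 : ¬ ∃ e' ∈ M, x3 ∈ e' := by
      rintro ⟨e', he'M, hx3e⟩
      have h2 := hadj_eq _ he'M _ hf2M x3 y2 hx3e (Sym2.mem_mk_left y2 n2) a32
      have h3 := hadj_eq _ he'M _ hf3M x3 y3 hx3e (Sym2.mem_mk_left y3 n3) a33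
      have hy3mem : y3 ∈ s(y2, n2) := by
        rw [← h2, h3]; exact Sym2.mem_mk_left y3 n3
      rcases Sym2.mem_iff.mp hy3mem with h' | h'
      · exact dBC h'.symm
      · exact ny23 (by rw [h']; exact hB2)
    have hf12 : s(y1, n1) ≠ s(y2, n2) := by
      intro h'
      have : y1 ∈ s(y2, n2) := by rw [← h']; exact Sym2.mem_mk_left y1 n1
      rcases Sym2.mem_iff.mp this with h'' | h''
      · exact dAB h''
      · exact (necol n2 y1 cn2 cy1) h''.symm
    have hf13 : s(y1, n1) ≠ s(y3, n3) := by
      intro h'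
      have : y1 ∈ s(y3, n3) := by rw [← h']; exact Sym2.mem_mk_left y1 n1
      rcases Sym2.mem_iff.mp this with h'' | h''
      · exact dAC h''
      · exact (necol n3 y1 cn3 cy1) h''.symm
    have hf32 : s(y3, n3) ≠ s(y2, n2) := by
      intro h'
      have : y3 ∈ s(y2, n2) := by rw [← h']; exact Sym2.mem_mk_left y3 n3
      rcases Sym2.mem_iff.mp this with h'' | h''
      · exact dBC h''.symm
      · exact (necol n2 y3 cn2 rfl) h''.symm
    have dah : n1 ≠ n2 := by
      intro h'
      apply hf12
      exact huniq _ hf1M _ hf2M n1 (Sym2.mem_mk_right y1 n1)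
        (by rw [h']; exact Sym2.mem_mk_right y2 n2)
    exact hP7 (mkP7 B (a := n1) (b := y1) (c := x1) (d := y3) (e := x3) (g := y2) (h := n2)
      hB1.symm a11.symm a13 a33.symm a32 hB2
      (nadj_same n1 x1 (cn1.trans c1.symm))
      ((hind _ hf1M _ hf3M hf13 n1 (Sym2.mem_mk_right y1 n1) y3 (Sym2.mem_mk_left y3 n3)).2)
      (nadj_same n1 x3 (cn1.trans c3.symm))
      ((hind _ hf1M _ hf2M hf12 n1 (Sym2.mem_mk_right y1 n1) y2 (Sym2.mem_mk_left y2 n2)).2)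
      (nadj_same n1 n2 (cn1.trans cn2.symm))
      ny13 (fun h' => n31 h'.symm) ny12
      ((hind _ hf1M _ hf2M hf12 y1 (Sym2.mem_mk_left y1 n1) n2 (Sym2.mem_mk_right y2 n2)).2)
      nx13 n12
      (nadj_same x1 n2 (c1.trans cn2.symm))
      (fun h' => ny23 h'.symm)
      ((hind _ hf3M _ hf2M hf32 y3 (Sym2.mem_mk_left y3 n3) n2 (Sym2.mem_mk_right y2 n2)).2)
      (nadj_same x3 n2 (c3.trans cn2.symm))
      (fun h' => hx1 ⟨s(y1, n1), hf1M, by rw [← h']; exact Sym2.mem_mk_right y1 n1⟩)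
      (necol n1 y3 cn1 rfl)
      (fun h' => hx3 ⟨s(y1, n1), hf1M, by rw [← h']; exact Sym2.mem_mk_right y1 n1⟩)
      (necol n1 y2 cn1 cy2)
      dah
      dAC (fun h' => dA3 h'.symm) dAB ((necol n2 y1 cn2 cy1).symm)
      d13 dB1 (fun h' => hx1 ⟨s(y2, n2), hf2M, by rw [h']; exact Sym2.mem_mk_right y2 n2⟩)
      (fun h' => dBC h'.symm) ((necol n2 y3 cn2 rfl).symm)
      (fun h' => hx3 ⟨s(y2, n2), hf2M, by rw [h']; exact Sym2.mem_mk_right y2 n2⟩))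
end
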